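/- arXiv:2002.00891 — 11 statements merged into one kernel-verified Lean document; each statement's English description precedes it below -/
import Mathlib

section
/- In the partial wreath product G ≀ I_n, for any Green's relation K ∈ {H, L, R, D, J}, two elements (g;a) and (h;b) are K-related in G ≀ I_n if and only if a and b are K-related in I_n. -/
/-- Multiplication on `G⁰ = G ∪ {0}`, modelled as `Option G`, with `0` absorbing. -/
def omul {G : Type*} [Group G] : Option G → Option G → Option G
  | some x, some y => some (x * y)
  | _, _ => none

lemma omul_isSome {G : Type*} [Group G] (x y : Option G) :
    (omul x y).isSome ↔ x.isSome ∧ y.isSome := by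
  cases x <;> cases y <;> simp [omul]

/-- The partial wreath product `G ≀ I_n`: pairs `(g; a)` with `a` a partial bijection of
`Fin n` (an element of the symmetric inverse monoid `I_n`) and `g ∈ (G⁰)ⁿ`,
where `g i ≠ 0` iff `i ∈ dom a`. -/
structure GWI (G : Type*) [Group G] (n : ℕ) where
  g : Fin n → Option G
  a : PEquiv (Fin n) (Fin n)
  compat : ∀ i, (g i).isSome ↔ (a i).isSome

namespace GWI

variable {G : Type*} [Group G] {n : ℕ}

@[ext] lemma ext {x y : GWI G n} (hg : x.g = y.g) (ha : x.a = y.a) : x = y := by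
  cases x; cases y; simp_all

/-- Multiplication in `G ≀ I_n`: `(g;a)(h;b) = (g ⬝ h_a; ab)`. -/
def mul (x y : GWI G n) : GWI G n where
  g := fun i => omul (x.g i) ((x.a i).bind y.g)
  a := x.a.trans y.a
  compat := by
    intro i
    rw [omul_isSome, x.compat i]
    show _ ↔ ((x.a i).bind y.a).isSome
    cases h : x.a i with
    | none => simp
    | some j => simp [y.compat j]

/-- The identity of `G ≀ I_n`. -/
def one : GWI G n where
  g := fun _ => some 1
  a := PEquiv.refl (Fin n)
  compat := by intro i; simp [PEquiv.refl]

/-- The inverse `(g;a)⁻¹ = (g_{a⁻¹}⁻¹; a⁻¹)` in `G ≀ I_n`. -/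
def inv (x : GWI G n) : GWI G n where
  g := fun i => ((x.a.symm i).bind x.g).map (·⁻¹)
  a := x.a.symm
  compat := by
    intro i
    cases h : x.a.symm i with
    | none => simp [h]
    | some j =>
        have : (x.a j).isSome := by
          rw [x.a.eq_some_iff] at h
          simp [h]
        simp [h, x.compat j, this]

/-- Green's relation `R`, relative to a multiplication `m` (for a monoid). -/
def gR {α : Type*} (m : α → α → α) (u v : α) : Prop :=
  (∃ s, m u s = v) ∧ (∃ t, m v t = u)

/-- Green's relation `L`, relative to a multiplication `m`. -/
def gL {α : Type*} (m : α → α → α) (u v : α) : Prop :=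
  (∃ s, m s u = v) ∧ (∃ t, m t v = u)

/-- Green's relation `H`. -/
def gH {α : Type*} (m : α → α → α) (u v : α) : Prop := gR m u v ∧ gL m u v

/-- Green's relation `D`. -/
def gD {α : Type*} (m : α → α → α) (u v : α) : Prop := ∃ w, gR m u w ∧ gL m w v

/-- Green's relation `J`. -/
def gJ {α : Type*} (m : α → α → α) (u v : α) : Prop :=
  (∃ s t, m (m s u) t = v) ∧ (∃ s t, m (m s v) t = u)

/-- The rank of an element of `I_n`: the size of its domain. -/
def rk (a : PEquiv (Fin n) (Fin n)) : ℕ :=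
  (Finset.univ.filter fun i => (a i).isSome).card

/-- The order preserving enumeration of the domain of an idempotent of `I_n`. -/
def domEnum (e : PEquiv (Fin n) (Fin n)) : Fin (rk e) → Fin n :=
  fun k => ((Finset.univ.filter fun i => (e i).isSome).orderIsoOfFin rfl k : Fin n)

end GWI


namespace GWI

variable {G : Type*} [Group G] {n : ℕ}

lemma omul_none_left (z : Option G) : omul none z = none := by cases z <;> rfl

lemma mul_a (x y : GWI G n) : (mul x y).a = x.a.trans y.a := rfl

lemma g_none {x : GWI G n} {i : Fin n} (h : x.a i = none) : x.g i = none := by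
  rw [← Option.not_isSome_iff_eq_none, x.compat, h]; simp

lemma dom_sub_of_trans {a b s : PEquiv (Fin n) (Fin n)} (h : a.trans s = b)
    {i : Fin n} (hb : (b i).isSome) : (a i).isSome := by
  rw [← h] at hb
  cases ha : a i with
  | none => rw [show (a.trans s) i = (a i).bind s from rfl, ha] at hb; simp at hb
  | some j => simp

lemma ran_sub_of_trans {a b s : PEquiv (Fin n) (Fin n)} (h : s.trans a = b)
    {j : Fin n} (hb : (b.symm j).isSome) : (a.symm j).isSome := by
  rw [← h, PEquiv.symm_trans_rev] at hb
  cases ha : a.symm j with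
  | none => rw [show (a.symm.trans s.symm) j = (a.symm j).bind s.symm from rfl, ha] at hb
            simp at hb
  | some i => simp

/-- `x * (x⁻¹ * y) = y` whenever `dom y.a ⊆ dom x.a`. -/
lemma mul_inv_cancel_left' (x y : GWI G n)
    (h : ∀ i, (y.a i).isSome → (x.a i).isSome) :
    mul x (mul (inv x) y) = y := by
  refine ext (funext fun i => ?_) (PEquiv.ext fun i => ?_)
  · simp only [mul, inv]
    cases hx : x.a i with
    | none =>
        have hy : y.a i = none := by
          cases hy : y.a i with
          | none => rfl
          | some j => have := h i (by simp [hy]); simp [hx] at this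
        rw [g_none hx, g_none hy]; simp [omul]
    | some j =>
        obtain ⟨g, hg⟩ := Option.isSome_iff_exists.mp ((x.compat i).mpr (by simp [hx]))
        have hsymm : x.a.symm j = some i := x.a.eq_some_iff.mpr hx
        simp only [hsymm, hg, Option.bind_some, Option.map_some]
        cases y.g i <;> simp [omul, mul_inv_cancel_left]
  · show ((x.a i).bind fun j => (x.a.symm j).bind y.a) = y.a i
    cases hx : x.a i with
    | none =>
        have hy : y.a i = none := by
          cases hy : y.a i with
          | none => rfl
          | some j => have := h i (by simp [hy]); simp [hx] at this
        simp [hy]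
    | some j => simp [x.a.eq_some_iff.mpr hx]

/-- `(y * x⁻¹) * x = y` whenever `ran y.a ⊆ ran x.a`. -/
lemma mul_inv_cancel_right' (x y : GWI G n)
    (h : ∀ j, (y.a.symm j).isSome → (x.a.symm j).isSome) :
    mul (mul y (inv x)) x = y := by
  refine ext (funext fun i => ?_) (PEquiv.ext fun i => ?_)
  · simp only [mul, inv]
    cases hy : y.a i with
    | none => rw [g_none hy]; simp [omul_none_left]
    | some j =>
        obtain ⟨hh, hhg⟩ := Option.isSome_iff_exists.mp ((y.compat i).mpr (by simp [hy]))
        have hsx : (x.a.symm j).isSome := h j (by simp [y.a.eq_some_iff.mpr hy])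
        obtain ⟨k, hk⟩ := Option.isSome_iff_exists.mp hsx
        have hxk : x.a k = some j := by
          have := x.a.symm.eq_some_iff.mpr hk; simpa using this
        obtain ⟨g, hg⟩ := Option.isSome_iff_exists.mp
          ((x.compat k).mpr (by simp [hxk]))
        simp only [PEquiv.trans, PEquiv.coe_mk, hy, hhg, hk, hg,
          Option.bind_some, Option.map_some]
        simp [omul, mul_inv_cancel_right]
  · show (((y.a i).bind x.a.symm).bind x.a) = y.a i
    cases hy : y.a i with
    | none => simp
    | some j =>
        have hsx : (x.a.symm j).isSome := h j (by simp [y.a.eq_some_iff.mpr hy])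
        obtain ⟨k, hk⟩ := Option.isSome_iff_exists.mp hsx
        have hxk : x.a k = some j := by
          have := x.a.symm.eq_some_iff.mpr hk; simpa using this
        simp [hk, hxk]

/-- Lift a partial bijection to `G ≀ I_n` with all coefficients `1`. -/
def lift (w : PEquiv (Fin n) (Fin n)) : GWI G n where
  g := fun i => if (w i).isSome then some 1 else none
  a := w
  compat := by intro i; cases h : w i <;> simp [h]

lemma lift_a (w : PEquiv (Fin n) (Fin n)) : (lift (G := G) w).a = w := rfl

lemma gR_iff (x y : GWI G n) : gR mul x y ↔ gR PEquiv.trans x.a y.a := by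
  constructor
  · rintro ⟨⟨s, hs⟩, ⟨t, ht⟩⟩
    exact ⟨⟨s.a, by rw [← hs]; rfl⟩, ⟨t.a, by rw [← ht]; rfl⟩⟩
  · rintro ⟨⟨s, hs⟩, ⟨t, ht⟩⟩
    exact ⟨⟨mul (inv x) y, mul_inv_cancel_left' x y fun i => dom_sub_of_trans hs⟩,
           ⟨mul (inv y) x, mul_inv_cancel_left' y x fun i => dom_sub_of_trans ht⟩⟩

lemma gL_iff (x y : GWI G n) : gL mul x y ↔ gL PEquiv.trans x.a y.a := by
  constructor
  · rintro ⟨⟨s, hs⟩, ⟨t, ht⟩⟩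
    exact ⟨⟨s.a, by rw [← hs]; rfl⟩, ⟨t.a, by rw [← ht]; rfl⟩⟩
  · rintro ⟨⟨s, hs⟩, ⟨t, ht⟩⟩
    exact ⟨⟨mul y (inv x), mul_inv_cancel_right' x y fun j => ran_sub_of_trans hs⟩,
           ⟨mul x (inv y), mul_inv_cancel_right' y x fun j => ran_sub_of_trans ht⟩⟩

end GWI

/-- For each of Green's relations `K ∈ {H, L, R, D, J}`, two elements `(g;a)` and `(h;b)`
of `G ≀ I_n` are `K`-related in `G ≀ I_n` iff `a` and `b` are `K`-related in `I_n`. -/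
theorem green_relations_GWI (G : Type*) [Group G] (n : ℕ) (x y : GWI G n) :
    (GWI.gH GWI.mul x y ↔ GWI.gH PEquiv.trans x.a y.a) ∧
    (GWI.gL GWI.mul x y ↔ GWI.gL PEquiv.trans x.a y.a) ∧
    (GWI.gR GWI.mul x y ↔ GWI.gR PEquiv.trans x.a y.a) ∧
    (GWI.gD GWI.mul x y ↔ GWI.gD PEquiv.trans x.a y.a) ∧
    (GWI.gJ GWI.mul x y ↔ GWI.gJ PEquiv.trans x.a y.a) := by
  refine ⟨?_, GWI.gL_iff x y, GWI.gR_iff x y, ?_, ?_⟩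
  · unfold GWI.gH
    rw [GWI.gR_iff, GWI.gL_iff]
  · constructor
    · rintro ⟨w, hR, hL⟩
      exact ⟨w.a, (GWI.gR_iff x w).mp hR, (GWI.gL_iff w y).mp hL⟩
    · rintro ⟨w, hR, hL⟩
      refine ⟨GWI.lift w, ?_, ?_⟩
      · rw [GWI.gR_iff]; exact hR
      · rw [GWI.gL_iff]; exact hL
  · constructor
    · rintro ⟨⟨s, t, hst⟩, ⟨u, v, huv⟩⟩
      exact ⟨⟨s.a, t.a, by rw [← hst]; rfl⟩, ⟨u.a, v.a, by rw [← huv]; rfl⟩⟩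
    · rintro ⟨⟨s, t, hst⟩, ⟨u, v, huv⟩⟩
      constructor
      · refine ⟨GWI.lift s, GWI.mul (GWI.inv (GWI.mul (GWI.lift s) x)) y, ?_⟩
        exact GWI.mul_inv_cancel_left' (GWI.mul (GWI.lift s) x) y
          (fun i => GWI.dom_sub_of_trans hst)
      · refine ⟨GWI.lift u, GWI.mul (GWI.inv (GWI.mul (GWI.lift u) y)) x, ?_⟩
        exact GWI.mul_inv_cancel_left' (GWI.mul (GWI.lift u) y) x
          (fun i => GWI.dom_sub_of_trans huv)
end

section
/- The partial automorphism monoid of the free G-act of rank n is isomorphic to the partial wreath product G ≀ I_n. -/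
/-- A partial automorphism of the free `G`-act of rank `n` (on `G × Fin n` with action
`g • (h,i) = (gh, i)`): a partial bijection which is `G`-equivariant (so its domain and
image are subacts and it is an isomorphism between them). -/
def PAutFree (G : Type*) [Group G] (n : ℕ) :=
  {θ : PEquiv (G × Fin n) (G × Fin n) //
    ∀ (g : G) (p : G × Fin n), θ (g * p.1, p.2) = (θ p).map fun q => (g * q.1, q.2)}

namespace PAutIso

variable {G : Type*} [Group G] {n : ℕ}

lemma equivar (θ : PAutFree G n) (h : G) (i : Fin n) :
    θ.1 (h, i) = (θ.1 (1, i)).map fun q => (h * q.1, q.2) := by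
  have := θ.2 h (1, i)
  simpa using this

lemma symm_equivar (θ : PAutFree G n) (g : G) (q : G × Fin n) :
    θ.1.symm (g * q.1, q.2) = (θ.1.symm q).map fun p => (g * p.1, p.2) := by
  cases hq : θ.1.symm q with
  | some p =>
      have h1 : θ.1 p = some q := θ.1.eq_some_iff.1 hq
      have h2 : θ.1 (g * p.1, p.2) = some (g * q.1, q.2) := by
        rw [θ.2 g p, h1]; rfl
      rw [θ.1.eq_some_iff.2 h2]; rfl
  | none =>
      cases hr : θ.1.symm (g * q.1, q.2) with
      | none => rfl
      | some r =>
          have h1 : θ.1 r = some (g * q.1, q.2) := θ.1.eq_some_iff.1 hr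
          have h2 : θ.1 (g⁻¹ * r.1, r.2) = some q := by
            rw [θ.2 g⁻¹ r, h1]
            simp
          have h3 := θ.1.eq_some_iff.2 h2
          rw [hq] at h3
          cases h3

lemma key_fwd (θ : PAutFree G n) {i j : Fin n}
    (h : (θ.1 (1, i)).map Prod.snd = some j) :
    (θ.1.symm (1, j)).map Prod.snd = some i := by
  obtain ⟨p, hp, hpj⟩ := Option.map_eq_some_iff.1 h
  have h1 : θ.1.symm p = some (1, i) := θ.1.eq_some_iff.2 hp
  have h2 : θ.1.symm (p.1⁻¹ * p.1, p.2) = some (p.1⁻¹ * 1, i) := by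
    rw [symm_equivar θ p.1⁻¹ p, h1]; rfl
  rw [inv_mul_cancel] at h2
  rw [hpj] at h2
  rw [h2]; rfl

lemma key_bwd (θ : PAutFree G n) {i j : Fin n}
    (h : (θ.1.symm (1, j)).map Prod.snd = some i) :
    (θ.1 (1, i)).map Prod.snd = some j := by
  obtain ⟨p, hp, hpi⟩ := Option.map_eq_some_iff.1 h
  have h1 : θ.1 p = some (1, j) := θ.1.eq_some_iff.1 hp
  have h2 : θ.1 (p.1⁻¹ * p.1, p.2) = some (p.1⁻¹ * 1, j) := by
    rw [equivar θ (p.1⁻¹ * p.1) p.2]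
    have h3 : θ.1 (1, p.2) = (θ.1 (p.1 * 1, p.2)).map fun q => (p.1⁻¹ * q.1, q.2) := by
      rw [θ.2 p.1 (1, p.2)]
      cases hh : θ.1 (1, p.2) <;> simp [hh]
    rw [inv_mul_cancel, h3]
    have : (p.1 * 1, p.2) = p := by simp
    rw [this, h1]
    simp [inv_mul_cancel]
  rw [inv_mul_cancel] at h2
  rw [hpi] at h2
  rw [h2]; rfl

/-- The map from partial automorphisms to the wreath product. -/
def toG (θ : PAutFree G n) : GWI G n where
  g i := (θ.1 (1, i)).map Prod.fst
  a := { toFun := fun i => (θ.1 (1, i)).map Prod.snd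
         invFun := fun j => (θ.1.symm (1, j)).map Prod.snd
         inv := by
           intro i j
           exact ⟨key_bwd θ, key_fwd θ⟩ }
  compat i := by cases h : θ.1 (1, i) <;> simp [h]

/-- The map from the wreath product to partial automorphisms. -/
def ofG (x : GWI G n) : PAutFree G n :=
  ⟨{ toFun := fun p => (x.g p.2).bind fun y => (x.a p.2).map fun j => (p.1 * y, j)
     invFun := fun q => (x.a.symm q.2).bind fun i => (x.g i).map fun y => (q.1 * y⁻¹, i)
     inv := by
       rintro ⟨hp, ip⟩ ⟨hq, iq⟩
       simp only [Option.mem_def, Option.bind_eq_some_iff, Option.map_eq_some_iff,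
         x.a.eq_some_iff, Prod.mk.injEq]
       constructor
       · rintro ⟨i, hi, y, hy, rfl, rfl⟩
         exact ⟨y, hy, iq, hi, by group, rfl⟩
       · rintro ⟨y, hy, j, hj, rfl, rfl⟩
         exact ⟨ip, hj, y, hy, by group, rfl⟩ },
   by
     rintro g ⟨h, i⟩
     show (x.g i).bind _ = ((x.g i).bind _).map _
     cases x.g i <;> cases x.a i <;> simp [mul_assoc]⟩

lemma left_inv (θ : PAutFree G n) : ofG (toG θ) = θ := by
  apply Subtype.ext
  apply PEquiv.ext
  rintro ⟨h, i⟩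
  show ((θ.1 (1, i)).map Prod.fst).bind
      (fun y => ((θ.1 (1, i)).map Prod.snd).map fun j => (h * y, j)) = θ.1 (h, i)
  rw [equivar θ h i]
  cases θ.1 (1, i) <;> simp

lemma right_inv (x : GWI G n) : toG (ofG x) = x := by
  have hcompat := x.compat
  apply GWI.ext
  · funext i
    show (((x.g i).bind fun y => (x.a i).map fun j => ((1 : G) * y, j)).map Prod.fst) = x.g i
    have := hcompat i
    cases hg : x.g i <;> cases ha : x.a i <;> simp_all
  · apply PEquiv.ext
    intro i
    show (((x.g i).bind fun y => (x.a i).map fun j => ((1 : G) * y, j)).map Prod.snd) = x.a i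
    have := hcompat i
    cases hg : x.g i <;> cases ha : x.a i <;> simp_all

end PAutIso

/-- The partial automorphism monoid of the free `G`-act of rank `n` is isomorphic to the
partial wreath product `G ≀ I_n`. -/
theorem pautFree_iso_GWI (G : Type*) [Group G] (n : ℕ) :
    ∃ Φ : PAutFree G n ≃ GWI G n,
      ∀ θ γ ρ : PAutFree G n, ρ.1 =
          θ.1.trans γ.1 →
        Φ ρ = GWI.mul (Φ θ) (Φ γ) := by
  refine ⟨⟨PAutIso.toG, PAutIso.ofG, PAutIso.left_inv, PAutIso.right_inv⟩, ?_⟩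
  intro θ γ ρ hρ
  simp only [Equiv.coe_fn_mk]
  apply GWI.ext
  · funext i
    show (ρ.1 (1, i)).map Prod.fst =
      omul ((θ.1 (1, i)).map Prod.fst)
        (((θ.1 (1, i)).map Prod.snd).bind fun j => (γ.1 (1, j)).map Prod.fst)
    rw [hρ]
    show ((θ.1 (1, i)).bind γ.1).map Prod.fst = _
    cases hθ : θ.1 (1, i) with
    | none => simp [omul]
    | some p =>
        obtain ⟨y, j⟩ := p
        have hb : ((some ((y, j) : G × Fin n)).bind γ.1 : Option (G × Fin n)) = γ.1 (y, j) := rfl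
        rw [hb, PAutIso.equivar γ y j]
        cases hγ : γ.1 (1, j) <;> simp [omul, hγ]
  · apply PEquiv.ext
    intro i
    show (ρ.1 (1, i)).map Prod.snd =
      ((θ.1 (1, i)).map Prod.snd).bind fun j => (γ.1 (1, j)).map Prod.snd
    rw [hρ]
    show ((θ.1 (1, i)).bind γ.1).map Prod.snd = _
    cases hθ : θ.1 (1, i) with
    | none => simp
    | some p =>
        obtain ⟨y, j⟩ := p
        have hb : ((some ((y, j) : G × Fin n)).bind γ.1 : Option (G × Fin n)) = γ.1 (y, j) := rfl
        rw [hb, PAutIso.equivar γ y j]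
        cases hγ : γ.1 (1, j) <;> simp [hγ]
end

section
/- The centralizer of the idempotents in G ≀ I_n is the set of elements (g; e) where e is an idempotent of I_n, i.e. e is a partial identity map. -/
section Aux

variable {G : Type*} [Group G] {n : ℕ}

lemma trans_apply' (f g : PEquiv (Fin n) (Fin n)) (i : Fin n) :
    (f.trans g) i = (f i).bind g := rfl

/-- The partial identity on `{j}`, as an element of `G ≀ I_n`. -/
def pid (j : Fin n) : GWI G n where
  g := fun k => if k = j then some 1 else none
  a := PEquiv.single j j
  compat := by
    intro k
    by_cases h : k = j <;> simp [PEquiv.single, h]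

lemma pid_idem (j : Fin n) : GWI.mul (pid (G := G) j) (pid j) = pid j := by
  apply GWI.ext
  · funext i
    by_cases h : i = j <;>
      simp [GWI.mul, pid, PEquiv.single, h, omul]
  · simp [GWI.mul, pid, PEquiv.single_trans_single]

end Aux

/-- The centralizer of the idempotents in `G ≀ I_n` consists exactly of the elements
`(g; e)` with `e` an idempotent (partial identity) of `I_n`. -/
theorem centralizer_idempotents_GWI (G : Type*) [Group G] (n : ℕ) (x : GWI G n) :
    (∀ f : GWI G n, GWI.mul f f = f → GWI.mul f x = GWI.mul x f) ↔
      x.a.trans x.a = x.a := by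
  constructor
  · intro h
    ext i j'
    rw [trans_apply']
    cases hx : x.a i with
    | none => simp
    | some j =>
      have hc := congrArg GWI.a (h (pid j) (pid_idem j))
      have hci := DFunLike.congr_fun hc i
      simp only [GWI.mul] at hci
      rw [trans_apply', trans_apply', hx] at hci
      simp only [Option.bind_some, PEquiv.single_apply] at hci
      -- hci : ((pid j).a i).bind x.a = some j
      by_cases hij : i = j
      · subst hij
        have := hci
        simp [pid, PEquiv.single] at this
        simp [this, hx]
      · exfalso
        simp [pid, PEquiv.single_apply_of_ne (Ne.symm hij)] at hci
  · intro hid f hf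
    -- x.a is a partial identity
    have hx : ∀ i, x.a i = none ∨ x.a i = some i := by
      intro i
      cases hxi : x.a i with
      | none => exact Or.inl rfl
      | some j =>
        have := DFunLike.congr_fun hid i
        rw [trans_apply', hxi] at this
        simp only [Option.bind_some] at this
        -- this : x.a j = some j
        have hij : i = j := PEquiv.inj x.a (b := j) (Option.mem_def.mpr hxi)
          (Option.mem_def.mpr this)
        exact Or.inr (by rw [hij])
    -- f.a is a partial identity
    have hfa : ∀ i, f.a i = none ∨ f.a i = some i := by
      intro i
      cases hfi : f.a i with
      | none => exact Or.inl rfl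
      | some j =>
        have := DFunLike.congr_fun (congrArg GWI.a hf) i
        simp only [GWI.mul] at this
        rw [trans_apply', hfi] at this
        simp only [Option.bind_some] at this
        have hij : i = j := PEquiv.inj f.a (b := j) (Option.mem_def.mpr hfi)
          (Option.mem_def.mpr this)
        exact Or.inr (by rw [hij])
    -- f.g is 1 on the domain of f.a
    have hfg : ∀ i, f.a i = some i → f.g i = some 1 := by
      intro i hi
      have hs : (f.g i).isSome := (f.compat i).mpr (by simp [hi])
      obtain ⟨h', hg⟩ := Option.isSome_iff_exists.mp hs
      have hgi := congrFun (congrArg GWI.g hf) i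
      simp only [GWI.mul, hi, Option.bind_some, hg, omul, Option.some.injEq] at hgi
      have h1 : h' = 1 := by
        have := mul_right_cancel (b := h') (a := h') (c := 1) (by simpa using hgi)
        exact this
      rw [hg, h1]
    apply GWI.ext
    · funext i
      simp only [GWI.mul]
      rcases hfa i with hfi | hfi <;> rcases hx i with hxi | hxi
      · have : x.g i = none := by
          cases hg : x.g i with
          | none => rfl
          | some h' =>
            have := (x.compat i).mp (by simp [hg])
            rw [hxi] at this; simp at this
        have hfgn : f.g i = none := by
          cases hg : f.g i with
          | none => rfl
          | some h' =>
            have := (f.compat i).mp (by simp [hg])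
            rw [hfi] at this; simp at this
        simp [hfi, hxi, this, hfgn, omul]
      · have hfgn : f.g i = none := by
          cases hg : f.g i with
          | none => rfl
          | some h' =>
            have := (f.compat i).mp (by simp [hg])
            rw [hfi] at this; simp at this
        cases x.g i <;> simp [hfi, hxi, hfgn, omul]
      · have hxg : x.g i = none := by
          cases hg : x.g i with
          | none => rfl
          | some h' =>
            have := (x.compat i).mp (by simp [hg])
            rw [hxi] at this; simp at this
        simp [hfi, hxi, hxg, hfg i hfi, omul]
      · have hxg : (x.g i).isSome := (x.compat i).mpr (by simp [hxi])
        obtain ⟨h', hg⟩ := Option.isSome_iff_exists.mp hxg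
        simp [hfi, hxi, hfg i hfi, hg, omul]
    · show f.a.trans x.a = x.a.trans f.a
      ext i j'
      rw [trans_apply', trans_apply']
      rcases hfa i with hfi | hfi <;> rcases hx i with hxi | hxi <;>
        simp [hfi, hxi]
end

section
/- Let {T_i ⊴ G^i : 1 ≤ i ≤ n} be a closed set of permutation-invariant normal subgroups (closed meaning the projection of T_i onto any i−1 coordinates lies in T_{i−1}). Then T = ⋃_{e ∈ E(I_n)} {(ḡ; e) : g ∈ T_{rk(e)}} (where ḡ places g in the coordinates of dom(e) and 0 elsewhere) is a normal subsemigroup of G ≀ I_n contained in the centralizer of the idempotents. -/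
/-- Given a family of subgroups `T i ≤ G^i`, the subset of `G ≀ I_n` consisting of the
elements `(ḡ; e)` with `e` idempotent and `g ∈ T (rk e)` placed in the coordinates of
`dom e` (and `0` elsewhere). -/
def GWI.unionSet {G : Type*} [Group G] {n : ℕ} (T : ∀ m : ℕ, Subgroup (Fin m → G)) :
    Set (GWI G n) :=
  {x | x.a.trans x.a = x.a ∧
    ∃ v, v ∈ T (GWI.rk x.a) ∧ ∀ k, x.g (GWI.domEnum x.a k) = some (v k)}

namespace GWI

variable {G : Type*} [Group G] {n : ℕ}

lemma ptrans_apply (f g : PEquiv (Fin n) (Fin n)) (i : Fin n) :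
    (f.trans g) i = (f i).bind g := rfl

/-- Partial identity predicate. -/
def PI (e : PEquiv (Fin n) (Fin n)) : Prop := ∀ i j, e i = some j → j = i

lemma pi_of_idem {e : PEquiv (Fin n) (Fin n)} (h : e.trans e = e) : PI e := by
  intro i j hij
  have h1 : (e.trans e) i = some j := by rw [h, hij]
  rw [ptrans_apply, hij] at h1
  have h2 : e.symm j = some j := e.eq_some_iff.2 h1
  have h3 : e.symm j = some i := e.eq_some_iff.2 hij
  rw [h2] at h3
  exact Option.some_inj.1 h3

lemma pi_apply {e : PEquiv (Fin n) (Fin n)} (he : PI e) (i : Fin n) :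
    e i = none ∨ e i = some i := by
  cases h : e i with
  | none => exact Or.inl rfl
  | some j =>
    have hji := he i j h
    subst hji
    exact Or.inr rfl

lemma pi_apply_some {e : PEquiv (Fin n) (Fin n)} (he : PI e) {i : Fin n}
    (h : (e i).isSome) : e i = some i := by
  rcases pi_apply he i with h1 | h1
  · rw [h1] at h; simp at h
  · exact h1

lemma idem_of_pi {e : PEquiv (Fin n) (Fin n)} (he : PI e) : e.trans e = e := by
  apply PEquiv.ext; intro i
  rw [ptrans_apply]
  rcases pi_apply he i with h | h <;> rw [h] <;> simp [h]

lemma symm_eq_of_pi {e : PEquiv (Fin n) (Fin n)} (he : PI e) : e.symm = e := by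
  apply PEquiv.ext; intro i
  cases h : e i with
  | none =>
    cases h2 : e.symm i with
    | none => rfl
    | some j =>
      have h3 : e j = some i := e.eq_some_iff.1 h2
      have := he j i h3
      subst this
      rw [h3] at h; exact absurd h (by simp)
  | some j =>
    have := he i j h
    subst this
    exact e.eq_some_iff.2 h

/-- The domain of a partial bijection as a finset. -/
def domSet (e : PEquiv (Fin n) (Fin n)) : Finset (Fin n) :=
  Finset.univ.filter fun i => (e i).isSome

lemma card_domSet (e : PEquiv (Fin n) (Fin n)) : (domSet e).card = rk e := rfl

lemma mem_domSet {e : PEquiv (Fin n) (Fin n)} {i : Fin n} :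
    i ∈ domSet e ↔ (e i).isSome := by simp [domSet]

lemma rk_le (e : PEquiv (Fin n) (Fin n)) : rk e ≤ n := by
  have := Finset.card_filter_le Finset.univ (fun i => ((e i).isSome : Prop))
  simpa [rk] using this

lemma domEnum_eq (e : PEquiv (Fin n) (Fin n)) (k : Fin (rk e)) :
    domEnum e k = (domSet e).orderEmbOfFin (card_domSet e) k := rfl

lemma domEnum_mem (e : PEquiv (Fin n) (Fin n)) (k : Fin (rk e)) :
    domEnum e k ∈ domSet e := by
  rw [domEnum_eq]; exact Finset.orderEmbOfFin_mem _ _ _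

lemma domEnum_strictMono (e : PEquiv (Fin n) (Fin n)) : StrictMono (domEnum e) := by
  have : domEnum e = fun k => (domSet e).orderEmbOfFin (card_domSet e) k :=
    funext fun k => domEnum_eq e k
  rw [this]
  exact ((domSet e).orderEmbOfFin (card_domSet e)).strictMono

/-- The index of an element of the domain in the order enumeration. -/
def dIdx (e : PEquiv (Fin n) (Fin n)) {i : Fin n} (h : i ∈ domSet e) : Fin (rk e) :=
  ((domSet e).orderIsoOfFin (card_domSet e)).symm ⟨i, h⟩

lemma domEnum_dIdx (e : PEquiv (Fin n) (Fin n)) {i : Fin n} (h : i ∈ domSet e) :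
    domEnum e (dIdx e h) = i := by
  rw [domEnum_eq, dIdx, ← Finset.coe_orderIsoOfFin_apply]
  simp

lemma dIdx_lt {e : PEquiv (Fin n) (Fin n)} {i i' : Fin n} (h : i ∈ domSet e)
    (h' : i' ∈ domSet e) (hlt : i < i') : dIdx e h < dIdx e h' := by
  have : (⟨i, h⟩ : domSet e) < ⟨i', h'⟩ := Subtype.mk_lt_mk.2 hlt
  exact ((domSet e).orderIsoOfFin (card_domSet e)).symm.strictMono this

/-- The vector of group elements carried by an element of `G ≀ I_n`, indexed by the
domain of its partial bijection. -/
def vec (x : GWI G n) : Fin (rk x.a) → G :=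
  fun k => (x.g (domEnum x.a k)).get
    ((x.compat _).2 (mem_domSet.1 (domEnum_mem x.a k)))

lemma g_domEnum (x : GWI G n) (k : Fin (rk x.a)) :
    x.g (domEnum x.a k) = some (vec x k) := by
  simp [vec]

lemma g_eq_of_mem (x : GWI G n) {i : Fin n} (h : i ∈ domSet x.a) :
    x.g i = some (vec x (dIdx x.a h)) := by
  have := g_domEnum x (dIdx x.a h)
  rwa [domEnum_dIdx] at this

lemma vec_eq {x : GWI G n} {v : Fin (rk x.a) → G}
    (hv : ∀ k, x.g (domEnum x.a k) = some (v k)) : vec x = v := by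
  funext k
  simp [vec, hv k]

section Restriction

variable (T : ∀ m : ℕ, Subgroup (Fin m → G))

lemma comp_strictMono_mem
    (hclosed : ∀ m, 2 ≤ m → m ≤ n → ∀ v ∈ T m,
      ∀ d : Fin (m - 1) → Fin m, StrictMono d → v ∘ d ∈ T (m - 1)) :
    ∀ m, m ≤ n → ∀ v ∈ T m, ∀ (k : ℕ) (d : Fin k → Fin m),
      StrictMono d → v ∘ d ∈ T k := by
  intro m
  induction m using Nat.strong_induction_on with
  | _ m IH =>
    intro hmn v hv k d hd
    rcases Nat.eq_zero_or_pos k with rfl | hk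
    · have : v ∘ d = 1 := Subsingleton.elim _ _
      rw [this]; exact one_mem _
    have hkm : k ≤ m := by
      simpa using Fintype.card_le_of_injective d hd.injective
    rcases eq_or_lt_of_le hkm with rfl | hlt
    · have hcu : (Finset.univ : Finset (Fin k)).card = k := by simp
      have h1 : d = Finset.univ.orderEmbOfFin hcu :=
        Finset.orderEmbOfFin_unique _ (fun x => Finset.mem_univ _) hd
      have h2 : (id : Fin k → Fin k) = Finset.univ.orderEmbOfFin hcu :=
        Finset.orderEmbOfFin_unique _ (fun x => Finset.mem_univ _) strictMono_id
      rw [h1, ← h2, Function.comp_id]; exact hv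
    · have hm2 : 2 ≤ m := by omega
      have hs : (Finset.univ.image d).card = k := by
        rw [Finset.card_image_of_injective _ hd.injective]; simp
      obtain ⟨C, hsC, -, hC⟩ := Finset.exists_subsuperset_card_eq
        (Finset.subset_univ (Finset.univ.image d))
        (show (Finset.univ.image d).card ≤ m - 1 by omega)
        (by simp)
      have hv' : v ∘ C.orderEmbOfFin hC ∈ T (m - 1) :=
        hclosed m hm2 hmn v hv _ (C.orderEmbOfFin hC).strictMono
      have hdmem : ∀ j, d j ∈ C := fun j =>
        hsC (Finset.mem_image_of_mem d (Finset.mem_univ j))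
      set d' : Fin k → Fin (m - 1) :=
        fun j => (C.orderIsoOfFin hC).symm ⟨d j, hdmem j⟩ with hd'def
      have hcomp : ∀ j, C.orderEmbOfFin hC (d' j) = d j := fun j => by
        rw [← Finset.coe_orderIsoOfFin_apply]
        simp [hd'def]
      have hd'mono : StrictMono d' := by
        intro a b hab
        have h1 : (⟨d a, hdmem a⟩ : C) < ⟨d b, hdmem b⟩ := Subtype.mk_lt_mk.2 (hd hab)
        exact (C.orderIsoOfFin hC).symm.strictMono h1
      have hmem := IH (m - 1) (by omega) (by omega) _ hv' k d' hd'mono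
      have heq : (v ∘ C.orderEmbOfFin hC) ∘ d' = v ∘ d := by
        funext j; simp [Function.comp, hcomp j]
      rwa [heq] at hmem

lemma comp_injective_mem
    (hinv : ∀ m, 1 ≤ m → m ≤ n → ∀ σ : Equiv.Perm (Fin m), ∀ v ∈ T m, v ∘ σ ∈ T m)
    (hclosed : ∀ m, 2 ≤ m → m ≤ n → ∀ v ∈ T m,
      ∀ d : Fin (m - 1) → Fin m, StrictMono d → v ∘ d ∈ T (m - 1)) :
    ∀ m, m ≤ n → ∀ v ∈ T m, ∀ (k : ℕ) (p : Fin k → Fin m),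
      Function.Injective p → v ∘ p ∈ T k := by
  intro m hmn v hv k p hp
  rcases Nat.eq_zero_or_pos k with rfl | hk
  · have : v ∘ p = 1 := Subsingleton.elim _ _
    rw [this]; exact one_mem _
  have hkm : k ≤ m := by simpa using Fintype.card_le_of_injective p hp
  have hcard : (Finset.univ.image p).card = k := by
    rw [Finset.card_image_of_injective _ hp]; simp
  set s := Finset.univ.image p with hsdef
  have hpmem : ∀ j, p j ∈ s := fun j => Finset.mem_image_of_mem p (Finset.mem_univ j)
  set σ : Fin k → Fin k := fun j => (s.orderIsoOfFin hcard).symm ⟨p j, hpmem j⟩ with hσdef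
  have hdσ : ∀ j, s.orderEmbOfFin hcard (σ j) = p j := fun j => by
    rw [← Finset.coe_orderIsoOfFin_apply]
    simp [hσdef]
  have hσinj : Function.Injective σ := fun a b h =>
    hp (by rw [← hdσ a, ← hdσ b, h])
  have hσbij := Finite.injective_iff_bijective.1 hσinj
  have h1 : v ∘ s.orderEmbOfFin hcard ∈ T k :=
    comp_strictMono_mem T hclosed m hmn v hv k _ (s.orderEmbOfFin hcard).strictMono
  have h2 := hinv k hk (hkm.trans hmn) (Equiv.ofBijective σ hσbij) _ h1
  have heq : (v ∘ s.orderEmbOfFin hcard) ∘ (Equiv.ofBijective σ hσbij) = v ∘ p := by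
    funext j
    exact congrArg v (hdσ j)
  rwa [heq] at h2

lemma conj_mem'
    (hnormal : ∀ m, 1 ≤ m → m ≤ n → (T m).Normal) :
    ∀ r, r ≤ n → ∀ w ∈ T r, ∀ η : Fin r → G,
      (fun k => η k * w k * (η k)⁻¹) ∈ T r := by
  intro r hrn w hw η
  rcases Nat.eq_zero_or_pos r with rfl | hr
  · have : (fun k => η k * w k * (η k)⁻¹) = 1 := Subsingleton.elim _ _
    rw [this]; exact one_mem _
  · have h1 := (hnormal r hr hrn).conj_mem w hw η
    have heq : η * w * η⁻¹ = (fun k => η k * w k * (η k)⁻¹) := by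
      funext k; simp [Pi.mul_apply]
    rwa [heq] at h1

end Restriction

lemma idem_char {f : GWI G n} (hf : GWI.mul f f = f) :
    PI f.a ∧ ∀ i, (f.a i).isSome → f.g i = some 1 := by
  have ha : f.a.trans f.a = f.a := congrArg GWI.a hf
  have hpi := pi_of_idem ha
  refine ⟨hpi, fun i hi => ?_⟩
  have hg : (GWI.mul f f).g i = f.g i := congrFun (congrArg GWI.g hf) i
  have hai : f.a i = some i := pi_apply_some hpi hi
  obtain ⟨c, hc⟩ := Option.isSome_iff_exists.1 ((f.compat i).2 hi)
  have hgg : (GWI.mul f f).g i = omul (f.g i) ((f.a i).bind f.g) := rfl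
  rw [hgg, hai] at hg
  rw [hc] at hg ⊢
  simp only [Option.bind_some, hc, omul] at hg
  have hcc : c * c = c := Option.some_inj.1 hg
  have : c = 1 := by
    have := mul_left_cancel (a := c) (b := c) (c := 1) (by rw [mul_one]; exact hcc)
    exact this
  rw [this]

end GWI

/-- Let `{T_i ⊴ G^i : 1 ≤ i ≤ n}` be a closed set of permutation-invariant normal
subgroups (closed: the projection of `T_i` onto any `i−1` of the coordinates lies in
`T_{i−1}`).  Then `T = ⋃_{e ∈ E(I_n)} {(ḡ; e) : g ∈ T_{rk e}}` is a normal subsemigroup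
of `G ≀ I_n` (a full, self-conjugate, inverse subsemigroup) contained in the centralizer
of the idempotents. -/
theorem closed_family_gives_normal_subsemigroup (G : Type*) [Group G] (n : ℕ)
    (T : ∀ m : ℕ, Subgroup (Fin m → G))
    (hnormal : ∀ m, 1 ≤ m → m ≤ n → (T m).Normal)
    (hinv : ∀ m, 1 ≤ m → m ≤ n → ∀ σ : Equiv.Perm (Fin m), ∀ v ∈ T m, v ∘ σ ∈ T m)
    (hclosed : ∀ m, 2 ≤ m → m ≤ n → ∀ v ∈ T m,
      ∀ d : Fin (m - 1) → Fin m, StrictMono d → v ∘ d ∈ T (m - 1)) :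
    (∀ x ∈ GWI.unionSet (n := n) T, ∀ y ∈ GWI.unionSet (n := n) T,
        GWI.mul x y ∈ GWI.unionSet (n := n) T) ∧
    (∀ x : GWI G n, GWI.mul x x = x → x ∈ GWI.unionSet (n := n) T) ∧
    (∀ x ∈ GWI.unionSet (n := n) T, GWI.inv x ∈ GWI.unionSet (n := n) T) ∧
    (∀ a : GWI G n, ∀ x ∈ GWI.unionSet (n := n) T,
        GWI.mul (GWI.mul a x) (GWI.inv a) ∈ GWI.unionSet (n := n) T) ∧
    (∀ x ∈ GWI.unionSet (n := n) T, ∀ f : GWI G n,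
        GWI.mul f f = f → GWI.mul f x = GWI.mul x f) := by
  refine ⟨?_, ?_, ?_, ?_, ?_⟩
  -- Part 1: closure under multiplication
  · intro x hx y hy
    obtain ⟨hxa, vx, hvx, hgx⟩ := hx
    obtain ⟨hya, vy, hvy, hgy⟩ := hy
    have hpx := GWI.pi_of_idem hxa
    have hpy := GWI.pi_of_idem hya
    have hvecx : GWI.vec x ∈ T (GWI.rk x.a) := by rw [GWI.vec_eq hgx]; exact hvx
    have hvecy : GWI.vec y ∈ T (GWI.rk y.a) := by rw [GWI.vec_eq hgy]; exact hvy
    set c := x.a.trans y.a with hcdef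
    have hpc : GWI.PI c := by
      intro i j hij
      rw [GWI.ptrans_apply] at hij
      cases h1 : x.a i with
      | none => rw [h1] at hij; simp at hij
      | some j1 =>
        have := hpx i j1 h1; subst this
        rw [h1] at hij
        simp only [Option.bind_some] at hij
        exact hpy _ _ hij
    have hsub1 : GWI.domSet c ⊆ GWI.domSet x.a := by
      intro i hi
      rw [GWI.mem_domSet] at hi ⊢
      rw [GWI.ptrans_apply] at hi
      cases h1 : x.a i with
      | none => rw [h1] at hi; simp at hi
      | some j => simp
    have hsub2 : GWI.domSet c ⊆ GWI.domSet y.a := by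
      intro i hi
      rw [GWI.mem_domSet] at hi ⊢
      rw [GWI.ptrans_apply] at hi
      cases h1 : x.a i with
      | none => rw [h1] at hi; simp at hi
      | some j =>
        have := hpx i j h1; subst this
        rw [h1] at hi; simpa using hi
    have hdx : StrictMono (fun k => GWI.dIdx x.a (hsub1 (GWI.domEnum_mem c k))) :=
      fun k k' h => GWI.dIdx_lt _ _ (GWI.domEnum_strictMono c h)
    have hdy : StrictMono (fun k => GWI.dIdx y.a (hsub2 (GWI.domEnum_mem c k))) :=
      fun k k' h => GWI.dIdx_lt _ _ (GWI.domEnum_strictMono c h)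
    have hm1 : GWI.vec x ∘ (fun k => GWI.dIdx x.a (hsub1 (GWI.domEnum_mem c k))) ∈
        T (GWI.rk c) :=
      GWI.comp_strictMono_mem T hclosed _ (GWI.rk_le x.a) _ hvecx _ _ hdx
    have hm2 : GWI.vec y ∘ (fun k => GWI.dIdx y.a (hsub2 (GWI.domEnum_mem c k))) ∈
        T (GWI.rk c) :=
      GWI.comp_strictMono_mem T hclosed _ (GWI.rk_le y.a) _ hvecy _ _ hdy
    refine ⟨GWI.idem_of_pi hpc, _, mul_mem hm1 hm2, fun k => ?_⟩
    have hix := hsub1 (GWI.domEnum_mem c k)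
    have hiy := hsub2 (GWI.domEnum_mem c k)
    have hax : x.a (GWI.domEnum c k) = some (GWI.domEnum c k) :=
      GWI.pi_apply_some hpx (GWI.mem_domSet.1 hix)
    show omul (x.g (GWI.domEnum c k)) ((x.a (GWI.domEnum c k)).bind y.g) =
      some (((GWI.vec x ∘ fun k => GWI.dIdx x.a (hsub1 (GWI.domEnum_mem c k))) *
        (GWI.vec y ∘ fun k => GWI.dIdx y.a (hsub2 (GWI.domEnum_mem c k)))) k)
    rw [hax]
    simp only [Option.bind_some]
    rw [GWI.g_eq_of_mem x hix, GWI.g_eq_of_mem y hiy]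
    simp [omul]
    rfl
  -- Part 2: contains all idempotents
  · intro x hx
    obtain ⟨hpx, h1⟩ := GWI.idem_char hx
    exact ⟨congrArg GWI.a hx, 1, one_mem _, fun k => by
      rw [h1 _ (GWI.mem_domSet.1 (GWI.domEnum_mem x.a k))]; simp⟩
  -- Part 3: closed under inverses
  · intro x hx
    obtain ⟨hxa, vx, hvx, hgx⟩ := hx
    have hpx := GWI.pi_of_idem hxa
    have hsymm : x.a.symm = x.a := GWI.symm_eq_of_pi hpx
    have hvecx : GWI.vec x ∈ T (GWI.rk x.a) := by rw [GWI.vec_eq hgx]; exact hvx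
    constructor
    · show x.a.symm.trans x.a.symm = x.a.symm
      rw [hsymm]; exact hxa
    · show ∃ v ∈ T (GWI.rk x.a.symm),
        ∀ k, (GWI.inv x).g (GWI.domEnum x.a.symm k) = some (v k)
      rw [hsymm]
      refine ⟨(GWI.vec x)⁻¹, inv_mem hvecx, fun k => ?_⟩
      show ((x.a.symm (GWI.domEnum x.a k)).bind x.g).map (·⁻¹) =
        some ((GWI.vec x)⁻¹ k)
      rw [hsymm, GWI.pi_apply_some hpx (GWI.mem_domSet.1 (GWI.domEnum_mem x.a k))]
      simp [GWI.g_domEnum x k]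
  -- Part 4: self-conjugate
  · intro z x hx
    obtain ⟨hxa, vx, hvx, hgx⟩ := hx
    have hpx := GWI.pi_of_idem hxa
    have hvecx : GWI.vec x ∈ T (GWI.rk x.a) := by rw [GWI.vec_eq hgx]; exact hvx
    set c := (z.a.trans x.a).trans z.a.symm with hcdef
    have hcap : ∀ i : Fin n, c i = ((z.a i).bind x.a).bind z.a.symm := fun i => rfl
    have hbsome : ∀ i : Fin n, (c i).isSome → (z.a i).isSome := by
      intro i hi
      cases h : z.a i with
      | none => rw [hcap, h] at hi; simp at hi
      | some j => simp
    have hasome : ∀ (i : Fin n) (h : (c i).isSome),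
        (x.a ((z.a i).get (hbsome i h))).isSome := by
      intro i hi
      obtain ⟨j, h⟩ := Option.isSome_iff_exists.1 (hbsome i hi)
      have hi' := hi
      rw [hcap, h] at hi'
      simp only [Option.bind_some] at hi'
      cases h2 : x.a j with
      | none => rw [h2] at hi'; simp at hi'
      | some j2 => simp [h, h2]
    have hpc : GWI.PI c := by
      intro i l hil
      rw [hcap] at hil
      cases h1 : z.a i with
      | none => rw [h1] at hil; simp at hil
      | some j =>
        rw [h1] at hil; simp only [Option.bind_some] at hil
        cases h2 : x.a j with
        | none => rw [h2] at hil; simp at hil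
        | some j2 =>
          have := hpx j j2 h2; subst this
          rw [h2] at hil; simp only [Option.bind_some] at hil
          have h3 := z.a.eq_some_iff.2 h1
          rw [h3] at hil
          exact (Option.some_inj.1 hil).symm
    set p : Fin (GWI.rk c) → Fin (GWI.rk x.a) := fun k =>
      GWI.dIdx x.a (GWI.mem_domSet.2
        (hasome _ (GWI.mem_domSet.1 (GWI.domEnum_mem c k)))) with hpdef
    set η : Fin (GWI.rk c) → G := fun k =>
      (z.g (GWI.domEnum c k)).get ((z.compat _).2
        (hbsome _ (GWI.mem_domSet.1 (GWI.domEnum_mem c k)))) with hηdef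
    have hbk : ∀ k, z.a (GWI.domEnum c k) = some (GWI.domEnum x.a (p k)) := by
      intro k
      rw [hpdef]
      simp only
      rw [GWI.domEnum_dIdx]
      exact (Option.some_get _).symm
    have hpinj : Function.Injective p := by
      intro k k' hkk
      have e1 := hbk k
      have e2 := hbk k'
      rw [hkk] at e1
      have s1 := z.a.eq_some_iff.2 e1
      have s2 := z.a.eq_some_iff.2 e2
      rw [s1] at s2
      exact (GWI.domEnum_strictMono c).injective (Option.some_inj.1 s2)
    have hcomp := GWI.comp_injective_mem T hinv hclosed _ (GWI.rk_le x.a)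
      _ hvecx _ p hpinj
    have hconj := GWI.conj_mem' T hnormal _ (GWI.rk_le c) _ hcomp η
    refine ⟨GWI.idem_of_pi hpc, _, hconj, fun k => ?_⟩
    have haj : x.a (GWI.domEnum x.a (p k)) = some (GWI.domEnum x.a (p k)) :=
      GWI.pi_apply_some hpx (GWI.mem_domSet.1 (GWI.domEnum_mem x.a (p k)))
    have hxgj : x.g (GWI.domEnum x.a (p k)) = some (GWI.vec x (p k)) :=
      GWI.g_domEnum x (p k)
    have hzg : z.g (GWI.domEnum c k) = some (η k) := (Option.some_get _).symm
    have hsymmj : z.a.symm (GWI.domEnum x.a (p k)) = some (GWI.domEnum c k) :=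
      z.a.eq_some_iff.2 (hbk k)
    show omul (omul (z.g (GWI.domEnum c k)) ((z.a (GWI.domEnum c k)).bind x.g))
        (((z.a (GWI.domEnum c k)).bind x.a).bind
          fun m => ((z.a.symm m).bind z.g).map (·⁻¹)) =
      some (η k * (GWI.vec x ∘ p) k * (η k)⁻¹)
    rw [hbk k, hzg]
    simp only [Option.bind_some]
    rw [hxgj, haj]
    simp only [Option.bind_some]
    rw [hsymmj]
    simp only [Option.bind_some, hzg]
    simp [omul]
    rfl
  -- Part 5: commutes with idempotents
  · intro x hx f hf
    obtain ⟨hxa, vx, hvx, hgx⟩ := hx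
    have hpx := GWI.pi_of_idem hxa
    obtain ⟨hpf, hf1⟩ := GWI.idem_char hf
    apply GWI.ext
    · funext i
      show omul (f.g i) ((f.a i).bind x.g) = omul (x.g i) ((x.a i).bind f.g)
      rcases GWI.pi_apply hpf i with h1 | h1 <;> rcases GWI.pi_apply hpx i with h2 | h2
      · rw [GWI.g_none h1, GWI.g_none h2, h1, h2]; simp [omul]
      · rw [GWI.g_none h1, h1, h2]
        simp only [Option.bind_none, Option.bind_some, GWI.g_none h1]
        cases x.g i <;> simp [omul]
      · rw [GWI.g_none h2, h1, h2]
        simp only [Option.bind_none, Option.bind_some, GWI.g_none h2]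
        cases f.g i <;> simp [omul]
      · have hfg : f.g i = some 1 := hf1 i (by rw [h1]; rfl)
        obtain ⟨cx, hcx⟩ := Option.isSome_iff_exists.1
          ((x.compat i).2 (by rw [h2]; rfl))
        rw [h1, h2]
        simp only [Option.bind_some]
        rw [hfg, hcx]
        simp [omul]
    · apply PEquiv.ext; intro i
      show (f.a i).bind x.a = (x.a i).bind f.a
      rcases GWI.pi_apply hpf i with h1 | h1 <;>
        rcases GWI.pi_apply hpx i with h2 | h2 <;> rw [h1, h2] <;> simp [h1, h2]
end

section
/- Let S be an inverse semigroup. The map T ↦ χ_T = {(a,b) : a⁻¹a = b⁻¹b and ab⁻¹ ∈ T} and the map χ ↦ ker(χ) = ⋃_{e ∈ E(S)} eχ are mutually inverse lattice isomorphisms between the lattice of normal subsemigroups of S contained in the centralizer of the idempotents and the lattice of idempotent-separating congruences on S. -/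
section InverseSemigroup

variable {S : Type*} [Semigroup S]

/-- The centralizer of the idempotents of `S`. -/
def ECent (S : Type*) [Semigroup S] : Set S :=
  {a | ∀ e : S, e * e = e → e * a = a * e}

/-- `T` is a normal subsemigroup of the inverse semigroup `S` (with inversion `i`):
full, closed under products and inverses, and self-conjugate. -/
def IsNormalSubsemigroup (i : S → S) (T : Set S) : Prop :=
  (∀ e : S, e * e = e → e ∈ T) ∧
  (∀ x ∈ T, ∀ y ∈ T, x * y ∈ T) ∧
  (∀ x ∈ T, i x ∈ T) ∧
  (∀ a : S, ∀ x ∈ T, a * x * i a ∈ T)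

/-- `r` is a (two-sided) congruence on `S`. -/
def IsCongruence (r : S → S → Prop) : Prop :=
  Equivalence r ∧ ∀ a b c d : S, r a b → r c d → r (a * c) (b * d)

/-- `r` is idempotent separating: distinct idempotents are not related. -/
def IsIdemSep (r : S → S → Prop) : Prop :=
  ∀ e f : S, e * e = e → f * f = f → r e f → e = f

/-- The congruence `χ_T` associated to a normal subsemigroup `T`. -/
def chiRel (i : S → S) (T : Set S) : S → S → Prop :=
  fun a b => i a * a = i b * b ∧ a * i b ∈ T

/-- The kernel of a congruence: the union of the classes of the idempotents. -/
def kerCong (r : S → S → Prop) : Set S :=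
  {a | ∃ e : S, e * e = e ∧ r a e}

end InverseSemigroup

namespace NSIsoAux

variable {S : Type*} [Semigroup S] {i : S → S}

lemma swapl {e f : S} (h : e * f = f * e) (c : S) : e * (f * c) = f * (e * c) := by
  rw [← mul_assoc, h, mul_assoc]

lemma absorb {e : S} (he : e * e = e) (c : S) : e * (e * c) = e * c := by
  rw [← mul_assoc, he]

section
variable (hinv : ∀ x : S, x * i x * x = x ∧ i x * x * i x = i x)
variable (hcomm : ∀ e f : S, e * e = e → f * f = f → e * f = f * e)

include hcomm in
lemma mulidem {e f : S} (he : e * e = e) (hf : f * f = f) :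
    (e * f) * (e * f) = e * f := by
  calc (e*f)*(e*f) = e * ((f*e) * f) := by simp only [mul_assoc]
    _ = e * ((e*f)*f) := by rw [hcomm f e hf he]
    _ = (e*e)*(f*f) := by simp only [mul_assoc]
    _ = e*f := by rw [he, hf]

include hinv

lemma h1 (x : S) : x * (i x * x) = x := by rw [← mul_assoc]; exact (hinv x).1
lemma h2 (x : S) : i x * (x * i x) = i x := by rw [← mul_assoc]; exact (hinv x).2

lemma h1c (x c : S) : x * (i x * (x * c)) = x * c := by
  rw [← mul_assoc, ← mul_assoc, (hinv x).1]

lemma h2c (x c : S) : i x * (x * (i x * c)) = i x * c := by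
  rw [← mul_assoc, ← mul_assoc, (hinv x).2]

lemma idemL (x : S) : (i x * x) * (i x * x) = i x * x := by
  rw [mul_assoc, h1 hinv]

lemma idemR (x : S) : (x * i x) * (x * i x) = x * i x := by
  rw [mul_assoc, h2 hinv]

omit hinv

include hcomm in
lemma inv_unique {x x' x'' : S}
    (h3 : x * x'' * x = x) (h4 : x'' * x * x'' = x'')
    (h1' : x * x' * x = x) (h2' : x' * x * x' = x') :
    x' = x'' := by
  have h3r : x * (x'' * x) = x := by rw [← mul_assoc]; exact h3
  have h4r : x'' * (x * x'') = x'' := by rw [← mul_assoc]; exact h4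
  have h1r : x * (x' * x) = x := by rw [← mul_assoc]; exact h1'
  have h2r : x' * (x * x') = x' := by rw [← mul_assoc]; exact h2'
  have e1 : (x' * x) * (x' * x) = x' * x := by rw [mul_assoc, h1r]
  have e2 : (x'' * x) * (x'' * x) = x'' * x := by rw [mul_assoc, h3r]
  have e3 : (x * x') * (x * x') = x * x' := by rw [mul_assoc, h2r]
  have e4 : (x * x'') * (x * x'') = x * x'' := by rw [mul_assoc, h4r]
  have c1 : (x' * x) * (x'' * x) = (x'' * x) * (x' * x) := hcomm _ _ e1 e2
  have c2 : (x * x') * (x * x'') = (x * x'') * (x * x') := hcomm _ _ e3 e4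
  have s1 : x * (x'' * (x * x')) = x * x' := by
    have := congrArg (· * x') h3r
    simpa only [mul_assoc] using this
  have s2 : x * (x' * (x * x'')) = x * x'' := by
    have := congrArg (· * x'') h1r
    simpa only [mul_assoc] using this
  have c1c : x' * (x * (x'' * (x * x'))) = x'' * (x * (x' * (x * x'))) := by
    have := swapl c1 x'
    simpa only [mul_assoc] using this
  have A : x' = x'' * (x * x') := by
    calc x' = x' * (x * x') := h2r.symm
      _ = x' * (x * (x'' * (x * x'))) := by rw [s1]
      _ = x'' * (x * (x' * (x * x'))) := c1c
      _ = x'' * (x * x') := by rw [h2r]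
  have B : x'' = x'' * (x * x') := by
    calc x'' = x'' * (x * x'') := h4r.symm
      _ = x'' * (x * (x' * (x * x''))) := by rw [s2]
      _ = x'' * ((x * x') * (x * x'')) := by simp only [mul_assoc]
      _ = x'' * ((x * x'') * (x * x')) := by rw [c2]
      _ = x'' * (x * (x'' * (x * x'))) := by simp only [mul_assoc]
      _ = x'' * (x * x') := by rw [s1]
  rw [A, ← B]

include hinv hcomm

lemma i_i (x : S) : i (i x) = x :=
  inv_unique hcomm (hinv x).2 (hinv x).1 (hinv (i x)).1 (hinv (i x)).2

lemma i_idem {e : S} (he : e * e = e) : i e = e :=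
  inv_unique hcomm (by rw [he, he]) (by rw [he, he]) (hinv e).1 (hinv e).2

lemma i_mul (x y : S) : i (x * y) = i y * i x := by
  refine inv_unique hcomm ?_ ?_ (hinv (x*y)).1 (hinv (x*y)).2
  · have cA : (y * i y) * (i x * x) = (i x * x) * (y * i y) :=
      hcomm _ _ (idemR hinv y) (idemL hinv x)
    have sw : y * (i y * (i x * (x * y))) = i x * (x * (y * (i y * y))) := by
      have := swapl cA y
      simpa only [mul_assoc] using this
    calc (x*y) * (i y * i x) * (x*y)
        = x * (y * (i y * (i x * (x * y)))) := by simp only [mul_assoc]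
      _ = x * (i x * (x * (y * (i y * y)))) := by rw [sw]
      _ = x * (i x * (x * y)) := by rw [h1 hinv y]
      _ = x * y := h1c hinv x y
  · have cA : (i x * x) * (y * i y) = (y * i y) * (i x * x) :=
      hcomm _ _ (idemL hinv x) (idemR hinv y)
    have sw : i x * (x * (y * (i y * i x))) = y * (i y * (i x * (x * i x))) := by
      have := swapl cA (i x)
      simpa only [mul_assoc] using this
    calc (i y * i x) * (x*y) * (i y * i x)
        = i y * (i x * (x * (y * (i y * i x)))) := by simp only [mul_assoc]
      _ = i y * (y * (i y * (i x * (x * i x)))) := by rw [sw]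
      _ = i y * (y * (i y * i x)) := by rw [h2 hinv x]
      _ = i y * i x := h2c hinv y (i x)

end

section
variable (hinv : ∀ x : S, x * i x * x = x ∧ i x * x * i x = i x)
variable (hcomm : ∀ e f : S, e * e = e → f * f = f → e * f = f * e)
include hinv hcomm

lemma partA (T : Set S) (hN : IsNormalSubsemigroup i T) (hTc : T ⊆ ECent S) :
    IsCongruence (chiRel i T) ∧ IsIdemSep (chiRel i T) := by
  obtain ⟨hfull, hprod, hinvT, hconj⟩ := hN
  -- helper: a ≡ b implies a * (i b * (b * Z)) = a * Z
  have habs : ∀ a b : S, i a * a = i b * b → ∀ Z : S, a * (i b * (b * Z)) = a * Z := by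
    intro a b hab Z
    rw [← mul_assoc (i b) b Z, ← hab, ← mul_assoc, h1 hinv]
  have hrefl : ∀ a, chiRel i T a a := fun a => ⟨rfl, hfull _ (idemR hinv a)⟩
  have hsymm : ∀ a b, chiRel i T a b → chiRel i T b a := by
    rintro a b ⟨hab, ht⟩
    refine ⟨hab.symm, ?_⟩
    have : i (a * i b) = b * i a := by rw [i_mul hinv hcomm, i_i hinv hcomm]
    rw [← this]; exact hinvT _ ht
  have htrans : ∀ a b c, chiRel i T a b → chiRel i T b c → chiRel i T a c := by
    rintro a b c ⟨hab, t1⟩ ⟨hbc, t2⟩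
    refine ⟨hab.trans hbc, ?_⟩
    have key : (a * i b) * (b * i c) = a * i c := by
      rw [mul_assoc]; exact habs a b hab (i c)
    rw [← key]; exact hprod _ t1 _ t2
  have hright : ∀ a b c, chiRel i T a b → chiRel i T (a * c) (b * c) := by
    rintro a b c ⟨hab, ht⟩
    constructor
    · rw [i_mul hinv hcomm, i_mul hinv hcomm, mul_assoc, mul_assoc]
      congr 1
      rw [← mul_assoc, ← mul_assoc, hab]
    · have hu : b * (c * i c) * i b ∈ T := hconj b _ (hfull _ (idemR hinv c))
      have key : (a * i b) * (b * (c * i c) * i b) = (a * c) * i (b * c) := by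
        rw [i_mul hinv hcomm]
        calc (a * i b) * (b * (c * i c) * i b)
            = a * (i b * (b * (c * (i c * i b)))) := by simp only [mul_assoc]
          _ = a * (c * (i c * i b)) := habs a b hab _
          _ = (a * c) * (i c * i b) := by rw [← mul_assoc]
      rw [← key]; exact hprod _ ht _ hu
  have hleft : ∀ a b c, chiRel i T a b → chiRel i T (c * a) (c * b) := by
    rintro a b c ⟨hab, ht⟩
    have htE : (i c * c) * (a * i b) = (a * i b) * (i c * c) :=
      hTc ht _ (idemL hinv c)
    constructor
    · rw [i_mul hinv hcomm, i_mul hinv hcomm, mul_assoc, mul_assoc]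
      have f1 : (a * i b) * b = a := by rw [mul_assoc, ← hab, h1 hinv]
      calc i a * (i c * (c * a))
          = i a * ((i c * c) * a) := by rw [← mul_assoc (i c) c a]
        _ = i a * ((i c * c) * ((a * i b) * b)) := by rw [f1]
        _ = i a * ((a * i b) * ((i c * c) * b)) := by rw [swapl htE b]
        _ = (i a * a) * (i b * ((i c * c) * b)) := by simp only [mul_assoc]
        _ = (i b * b) * (i b * ((i c * c) * b)) := by rw [hab]
        _ = i b * ((i c * c) * b) := by rw [mul_assoc]; exact h2c hinv b _
        _ = i b * (i c * (c * b)) := by rw [mul_assoc (i c) c b]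
    · have key : c * (a * i b) * i c = (c * a) * i (c * b) := by
        rw [i_mul hinv hcomm]
        simp only [mul_assoc]
      rw [← key]; exact hconj c _ ht
  refine ⟨⟨⟨hrefl, fun {a b} h => hsymm a b h, fun {a b c} h1 h2 => htrans a b c h1 h2⟩, ?_⟩, ?_⟩
  · intro a b c d h1 h2
    exact htrans _ _ _ (hright a b c h1) (hleft c d b h2)
  · intro e f he hf ⟨h, _⟩
    rw [i_idem hinv hcomm he, i_idem hinv hcomm hf, he, hf] at h
    exact h


lemma keyK {r : S → S → Prop} (hr : IsCongruence r) (hsep : IsIdemSep r)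
    {a e : S} (he : e * e = e) (hae : r a e) :
    a * i a = e ∧ i a * a = e := by
  obtain ⟨heq, hmul⟩ := hr
  have hL : (i a * a) * (i a * a) = i a * a := idemL hinv a
  have hR : (a * i a) * (a * i a) = a * i a := idemR hinv a
  have h5 : r (a * e) e := by
    have := hmul a e e e hae (heq.refl e); rwa [he] at this
  have h6 : r a (a * e) := heq.trans hae (heq.symm h5)
  have h7 : r (i a * a) ((i a * a) * e) := by
    have := hmul (i a) (i a) a (a * e) (heq.refl (i a)) h6
    rwa [← mul_assoc] at this
  have E1 : i a * a = (i a * a) * e := hsep _ _ hL (mulidem hcomm hL he) h7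
  have h8 : r (e * a) e := by
    have := hmul e e a e (heq.refl e) hae; rwa [he] at this
  have h9 : r a (e * a) := heq.trans hae (heq.symm h8)
  have h10 : r (a * i a) (e * (a * i a)) := by
    have := hmul a (e * a) (i a) (i a) h9 (heq.refl (i a))
    rwa [mul_assoc] at this
  have E2 : a * i a = e * (a * i a) := hsep _ _ hR (mulidem hcomm he hR) h10
  have h11 : r (e * (i a * a)) e := by
    have := hmul e a (i a * a) (i a * a) (heq.symm hae) (heq.refl _)
    rw [h1 hinv a] at this
    exact heq.trans this hae
  have E3 : e * (i a * a) = e := hsep _ _ (mulidem hcomm he hL) he h11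
  have h12 : r ((a * i a) * e) e := by
    have := hmul (a * i a) (a * i a) e a (heq.refl _) (heq.symm hae)
    rw [(hinv a).1] at this
    exact heq.trans this hae
  have E4 : (a * i a) * e = e := hsep _ _ (mulidem hcomm hR he) he h12
  constructor
  · rw [E2, hcomm _ _ he hR]; exact E4
  · rw [E1, ← hcomm _ _ he hL]; exact E3

lemma partB {r : S → S → Prop} (hr : IsCongruence r) (hsep : IsIdemSep r) :
    IsNormalSubsemigroup i (kerCong r) ∧ kerCong r ⊆ ECent S := by
  constructor
  · refine ⟨fun e he => ⟨e, he, hr.1.refl e⟩, ?_, ?_, ?_⟩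
    · rintro x ⟨e, he, hxe⟩ y ⟨f, hf, hyf⟩
      exact ⟨e * f, mulidem hcomm he hf, hr.2 _ _ _ _ hxe hyf⟩
    · rintro x ⟨e, he, hxe⟩
      refine ⟨e, he, ?_⟩
      obtain ⟨K1, K2⟩ := keyK hinv hcomm hr hsep he hxe
      have step : r (i x * x) (i x * e) := hr.2 _ _ _ _ (hr.1.refl (i x)) hxe
      have hixe : i x * e = i x := by rw [← K1]; exact h2 hinv x
      rw [K2, hixe] at step
      exact hr.1.symm step
    · rintro b x ⟨e, he, hxe⟩
      refine ⟨b * e * i b, ?_, ?_⟩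
      · have cc : e * (i b * b) = (i b * b) * e := hcomm _ _ he (idemL hinv b)
        have sw : e * (i b * (b * (e * i b))) = i b * (b * (e * (e * i b))) := by
          have := swapl cc (e * i b)
          simpa only [mul_assoc] using this
        calc (b * e * i b) * (b * e * i b)
            = b * (e * (i b * (b * (e * i b)))) := by simp only [mul_assoc]
          _ = b * (i b * (b * (e * (e * i b)))) := by rw [sw]
          _ = b * (i b * (b * (e * i b))) := by rw [absorb he (i b)]
          _ = b * (e * i b) := h1c hinv b _
          _ = b * e * i b := by rw [← mul_assoc]
      · exact hr.2 _ _ _ _ (hr.2 _ _ _ _ (hr.1.refl b) hxe) (hr.1.refl (i b))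
  · rintro a ⟨e, he, hae⟩ f hf
    obtain ⟨K1, K2⟩ := keyK hinv hcomm hr hsep he hae
    have hfa : r (f * a) (f * e) := hr.2 _ _ _ _ (hr.1.refl f) hae
    have hfe : (f * e) * (f * e) = f * e := mulidem hcomm hf he
    obtain ⟨_, K2'⟩ := keyK hinv hcomm hr hsep hfe hfa
    -- K2' : i (f * a) * (f * a) = f * e
    rw [i_mul hinv hcomm, i_idem hinv hcomm hf] at K2'
    have hX : i a * (f * a) = f * e := by
      rw [← K2']; rw [mul_assoc, absorb hf a]
    have ea : e * a = a := by rw [← K1]; exact (hinv a).1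
    have ae : a * e = a := by rw [← K2, ← mul_assoc]; exact (hinv a).1
    have main : a * f = f * a := by
      calc a * f = a * (e * f) := by rw [← mul_assoc, ae]
        _ = a * (f * e) := by rw [hcomm e f he hf]
        _ = a * (i a * (f * a)) := by rw [hX]
        _ = (a * i a) * (f * a) := by rw [mul_assoc]
        _ = e * (f * a) := by rw [K1]
        _ = (e * f) * a := by rw [mul_assoc]
        _ = (f * e) * a := by rw [hcomm e f he hf]
        _ = f * (e * a) := by rw [mul_assoc]
        _ = f * a := by rw [ea]
    exact main.symm


lemma partC {r : S → S → Prop} (hr : IsCongruence r) (hsep : IsIdemSep r) :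
    chiRel i (kerCong r) = r := by
  funext a b
  apply propext
  constructor
  · rintro ⟨heq, e, he, ht⟩
    obtain ⟨K1, K2⟩ := keyK hinv hcomm hr hsep he ht
    have hiab : i (a * i b) = b * i a := by
      rw [i_mul hinv hcomm, i_i hinv hcomm]
    rw [hiab] at K1 K2
    have hE' : e = b * i b := by
      rw [← K2]
      calc (b * i a) * (a * i b) = b * ((i a * a) * i b) := by simp only [mul_assoc]
        _ = b * ((i b * b) * i b) := by rw [heq]
        _ = b * i b := by rw [mul_assoc, h2 hinv]
    have f1 : (a * i b) * b = a := by rw [mul_assoc, ← heq, h1 hinv]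
    have heb : e * b = b := by rw [hE']; exact (hinv b).1
    have step : r ((a * i b) * b) (e * b) := hr.2 _ _ _ _ ht (hr.1.refl b)
    rw [f1, heb] at step
    exact step
  · intro hab
    constructor
    · have h5 : r (a * (i a * a)) (b * (i a * a)) := hr.2 _ _ _ _ hab (hr.1.refl _)
      rw [h1 hinv] at h5
      have h6 : r b (b * (i a * a)) := hr.1.trans (hr.1.symm hab) h5
      have h7 : r (i b * b) ((i b * b) * (i a * a)) := by
        have := hr.2 _ _ _ _ (hr.1.refl (i b)) h6
        rwa [← mul_assoc] at this
      have E1 : i b * b = (i b * b) * (i a * a) :=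
        hsep _ _ (idemL hinv b) (mulidem hcomm (idemL hinv b) (idemL hinv a)) h7
      have h5' : r (b * (i b * b)) (a * (i b * b)) := hr.2 _ _ _ _ (hr.1.symm hab) (hr.1.refl _)
      rw [h1 hinv] at h5'
      have h6' : r a (a * (i b * b)) := hr.1.trans hab h5'
      have h7' : r (i a * a) ((i a * a) * (i b * b)) := by
        have := hr.2 _ _ _ _ (hr.1.refl (i a)) h6'
        rwa [← mul_assoc] at this
      have E2 : i a * a = (i a * a) * (i b * b) :=
        hsep _ _ (idemL hinv a) (mulidem hcomm (idemL hinv a) (idemL hinv b)) h7'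
      rw [E2, hcomm _ _ (idemL hinv a) (idemL hinv b), ← E1]
    · exact ⟨b * i b, idemR hinv b, hr.2 _ _ _ _ hab (hr.1.refl (i b))⟩

lemma partD (T : Set S) (hN : IsNormalSubsemigroup i T) (hTc : T ⊆ ECent S) :
    kerCong (chiRel i T) = T := by
  ext a
  constructor
  · rintro ⟨e, he, heq, ht⟩
    rw [i_idem hinv hcomm he, he] at heq
    rw [i_idem hinv hcomm he] at ht
    have : a * e = a := by rw [← heq, h1 hinv]
    rwa [this] at ht
  · intro ha
    refine ⟨i a * a, idemL hinv a, ?_, ?_⟩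
    · rw [i_idem hinv hcomm (idemL hinv a), idemL hinv a]
    · rw [i_idem hinv hcomm (idemL hinv a), h1 hinv]
      exact ha

lemma partE (T T' : Set S) :
    T ⊆ T' ↔ ∀ a b : S, chiRel i T a b → chiRel i T' a b := by
  constructor
  · rintro hsub a b ⟨h, ht⟩
    exact ⟨h, hsub ht⟩
  · intro h x hx
    have c1 : i x * x = i (i x * x) * (i x * x) := by
      rw [i_idem hinv hcomm (idemL hinv x), idemL hinv x]
    have c2 : x * i (i x * x) ∈ T := by
      rw [i_idem hinv hcomm (idemL hinv x), h1 hinv]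
      exact hx
    have := (h x (i x * x) ⟨c1, c2⟩).2
    rwa [i_idem hinv hcomm (idemL hinv x), h1 hinv] at this

end
end NSIsoAux


/-- For an inverse semigroup `S` (a semigroup with an inversion `i` satisfying
`x (i x) x = x`, `(i x) x (i x) = i x`, and with commuting idempotents), the maps
`T ↦ χ_T` and `χ ↦ ker χ` are mutually inverse lattice isomorphisms between the lattice
of normal subsemigroups of `S` contained in the centralizer of the idempotents and the
lattice of idempotent-separating congruences on `S`. -/
theorem normal_subsemigroups_iso_idemsep_congruences
    (S : Type*) [Semigroup S] (i : S → S)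
    (hinv : ∀ x : S, x * i x * x = x ∧ i x * x * i x = i x)
    (hcomm : ∀ e f : S, e * e = e → f * f = f → e * f = f * e) :
    (∀ T : Set S, IsNormalSubsemigroup i T → T ⊆ ECent S →
      IsCongruence (chiRel i T) ∧ IsIdemSep (chiRel i T)) ∧
    (∀ r : S → S → Prop, IsCongruence r → IsIdemSep r →
      IsNormalSubsemigroup i (kerCong r) ∧ kerCong r ⊆ ECent S) ∧
    (∀ r : S → S → Prop, IsCongruence r → IsIdemSep r → chiRel i (kerCong r) = r) ∧
    (∀ T : Set S, IsNormalSubsemigroup i T → T ⊆ ECent S → kerCong (chiRel i T) = T) ∧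
    (∀ T T' : Set S, IsNormalSubsemigroup i T → T ⊆ ECent S →
      IsNormalSubsemigroup i T' → T' ⊆ ECent S →
      (T ⊆ T' ↔ ∀ a b : S, chiRel i T a b → chiRel i T' a b)) := by
  exact ⟨fun T hN hTc => NSIsoAux.partA hinv hcomm T hN hTc,
    fun r hr hsep => NSIsoAux.partB hinv hcomm hr hsep,
    fun r hr hsep => NSIsoAux.partC hinv hcomm hr hsep,
    fun T hN hTc => NSIsoAux.partD hinv hcomm T hN hTc,
    fun T T' _ _ _ _ => NSIsoAux.partE hinv hcomm T T'⟩
end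

section
/- Let m ≥ 3 and K ⊴ G^m be a permutation-invariant normal subgroup. Let L = {g : (g, k_2, ..., k_m) ∈ K for some k_i} and N = {n : (n,1,...,1) ∈ K}. Then the commutator [G, L] is contained in N; in particular L/N is abelian. -/
variable {G : Type*} [Group G]

/-- `L(K)`: the projection of `K ≤ G^m` onto the first coordinate. -/
def Lsub {m : ℕ} [NeZero m] (K : Subgroup (Fin m → G)) : Subgroup G :=
  Subgroup.map (Pi.evalMonoidHom (fun _ : Fin m => G) 0) K

/-- `N(K) = {n : (n,1,…,1) ∈ K}`. -/
def Nsub {m : ℕ} [NeZero m] (K : Subgroup (Fin m → G)) : Subgroup G :=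
  Subgroup.comap (MonoidHom.mulSingle (fun _ : Fin m => G) 0) K

/-- `M(K) = {g : (g,h,1,…,1) ∈ K for some h}`: the first-coordinate projection of the
elements of `K` supported on the first two coordinates. -/
def Msub {m : ℕ} [NeZero m] (K : Subgroup (Fin m → G)) : Subgroup G :=
  Subgroup.map (Pi.evalMonoidHom (fun _ : Fin m => G) 0)
    (K ⊓ ⨅ i ∈ {i : Fin m | i ≠ 0 ∧ i ≠ 1}, (Pi.evalMonoidHom (fun _ : Fin m => G) i).ker)

/-- Let `m ≥ 3` and `K ⊴ G^m` a permutation-invariant normal subgroup, and let `L` be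
the projection of `K` to the first coordinate and `N = {n : (n,1,…,1) ∈ K}`.  Then the
commutator `[G, L]` is contained in `N`; in particular `L/N` is abelian (all commutators
of elements of `L` lie in `N`). -/
theorem commutator_in_N (G : Type*) [Group G] (m : ℕ)
    (K : Subgroup (Fin (m + 3) → G)) (hKn : K.Normal)
    (hKinv : ∀ σ : Equiv.Perm (Fin (m + 3)), ∀ v ∈ K, v ∘ σ ∈ K) :
    ⁅(⊤ : Subgroup G), Lsub K⁆ ≤ Nsub K ∧
    ∀ a ∈ Lsub K, ∀ b ∈ Lsub K, a * b * a⁻¹ * b⁻¹ ∈ Nsub K := by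
  have key : ∀ g : G, ∀ l ∈ Lsub K, g * l * g⁻¹ * l⁻¹ ∈ Nsub K := by
    intro g l hl
    obtain ⟨k, hk, hk0⟩ := hl
    have hmem : (Pi.mulSingle 0 g) * k * (Pi.mulSingle 0 g)⁻¹ * k⁻¹ ∈ K := by
      exact K.mul_mem (hKn.conj_mem k hk (Pi.mulSingle 0 g)) (K.inv_mem hk)
    have heq : (MonoidHom.mulSingle (fun _ : Fin (m + 3) => G) 0) (g * l * g⁻¹ * l⁻¹)
        = (Pi.mulSingle 0 g) * k * (Pi.mulSingle 0 g)⁻¹ * k⁻¹ := by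
      funext i
      by_cases hi : i = 0
      · subst hi
        simp [MonoidHom.mulSingle_apply, ← hk0, Pi.evalMonoidHom]
      · simp [MonoidHom.mulSingle_apply, Pi.mulSingle_eq_of_ne hi]
    show (MonoidHom.mulSingle (fun _ : Fin (m + 3) => G) 0) (g * l * g⁻¹ * l⁻¹) ∈ K
    rw [heq]; exact hmem
  constructor
  · rw [Subgroup.commutator_le]
    intro g _ l hl
    exact key g l hl
  · intro a ha b hb
    exact key a b hb
end

section
/- Let m ≥ 3 and K ⊴ G^m be a permutation-invariant normal subgroup, and let M = {g : (g,h,1,...,1) ∈ K for some h}. If (g_1, ..., g_m) ∈ K then g_1 M = g_2 M = ... = g_m M. -/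
variable {G : Type*} [Group G]

/-- Let `m ≥ 3` and `K ⊴ G^m` a permutation-invariant normal subgroup, and let
`M = {g : (g,h,1,…,1) ∈ K for some h}`.  If `(g_1,…,g_m) ∈ K` then
`g_1 M = g_2 M = … = g_m M`. -/
theorem same_coset (G : Type*) [Group G] (m : ℕ)
    (K : Subgroup (Fin (m + 3) → G)) (hKn : K.Normal)
    (hKinv : ∀ σ : Equiv.Perm (Fin (m + 3)), ∀ v ∈ K, v ∘ σ ∈ K)
    (k : Fin (m + 3) → G) (hk : k ∈ K) :
    ∀ i j : Fin (m + 3), (k i)⁻¹ * k j ∈ Msub K := by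
  intro i j
  rcases eq_or_ne i j with rfl | hij
  · simpa using (Msub K).one_mem
  · set τ := Equiv.swap i j with hτ
    set w : Fin (m + 3) → G := k⁻¹ * (k ∘ τ) with hw
    have hwK : w ∈ K := mul_mem (inv_mem hk) (hKinv τ k hk)
    set j' := Equiv.swap (0 : Fin (m + 3)) i j with hj'
    have hj'0 : j' ≠ 0 := by
      intro h
      have := congrArg (Equiv.swap (0 : Fin (m + 3)) i) h
      rw [hj', Equiv.swap_apply_self, Equiv.swap_apply_left] at this
      exact hij this.symm
    set σ : Equiv.Perm (Fin (m + 3)) := (Equiv.swap 1 j').trans (Equiv.swap 0 i) with hσ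
    have hσ0 : σ 0 = i := by
      simp [hσ, Equiv.swap_apply_of_ne_of_ne (by simp : (0 : Fin (m+3)) ≠ 1) (Ne.symm hj'0)]
    have hσ1 : σ 1 = j := by
      simp [hσ, hj', Equiv.swap_apply_self]
    have hvK : w ∘ σ ∈ K := hKinv σ w hwK
    rw [Msub, Subgroup.mem_map]
    refine ⟨w ∘ σ, ?_, ?_⟩
    · rw [Subgroup.mem_inf]
      refine ⟨hvK, ?_⟩
      simp only [Subgroup.mem_iInf, Set.mem_setOf_eq, MonoidHom.mem_ker]
      rintro l ⟨hl0, hl1⟩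
      have hli : σ l ≠ i := by
        rw [← hσ0]; exact fun h => hl0 (σ.injective h)
      have hlj : σ l ≠ j := by
        rw [← hσ1]; exact fun h => hl1 (σ.injective h)
      show w (σ l) = 1
      have : τ (σ l) = σ l := Equiv.swap_apply_of_ne_of_ne hli hlj
      simp [hw, Pi.mul_apply, Pi.inv_apply, Function.comp, this]
    · show w (σ 0) = (k i)⁻¹ * k j
      rw [hσ0]
      simp [hw, Pi.mul_apply, Pi.inv_apply, Function.comp, hτ, Equiv.swap_apply_left]
end

section
/- Let m ≥ 3 and K ⊴ G^m be a permutation-invariant normal subgroup with L, M, N defined as the first-coordinate projection of K, the first-coordinate projection of {(g,h) : (g,h,1,...,1) ∈ K}, and {n : (n,1,...,1) ∈ K}, respectively. Then the map φ : L → L/N sending g to yN where (y, g, g, ..., g) ∈ K is a well-defined group homomorphism; its restriction to M is g ↦ g^{1−m}N; and (k_1,...,k_m) ∈ K iff k_1 M = ... = k_m M and k_1 φ = k_1^{2−m} k_2 ⋯ k_m N. -/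
variable {G : Type*} [Group G]

section Aux
variable {m : ℕ} {K : Subgroup (Fin (m + 3) → G)}

lemma fin2_val : ((2 : Fin (m + 3)) : ℕ) = 2 := by
  show 2 % (m + 3) = 2
  exact Nat.mod_eq_of_lt (by omega)

lemma fin2_ne_zero : (2 : Fin (m + 3)) ≠ 0 := by
  simp [Fin.ext_iff, fin2_val, Nat.mod_eq_of_lt (show 2 < m + 3 by omega)]

lemma fin2_ne_one : (2 : Fin (m + 3)) ≠ 1 := by
  simp [Fin.ext_iff, fin2_val, Nat.mod_eq_of_lt (show 2 < m + 3 by omega)]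

lemma mem_N_iff {a : G} : a ∈ Nsub K ↔ Pi.mulSingle (0 : Fin (m + 3)) a ∈ K := Iff.rfl

lemma mem_L_iff {g : G} : g ∈ Lsub K ↔ ∃ k ∈ K, k 0 = g := by
  simp [Lsub, Subgroup.mem_map, Pi.evalMonoidHom]

lemma mem_M_iff {a : G} : a ∈ Msub K ↔
    ∃ v, (v ∈ K ∧ ∀ i : Fin (m + 3), i ≠ 0 → i ≠ 1 → v i = 1) ∧ v 0 = a := by
  simp [Msub, Subgroup.mem_map, Subgroup.mem_inf, Subgroup.mem_iInf,
    MonoidHom.mem_ker, Pi.evalMonoidHom, Set.mem_setOf_eq, and_imp]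

end Aux
section Aux2
variable {m : ℕ} {K : Subgroup (Fin (m + 3) → G)}

/-- Every coordinate of an element of `K` lies in `L`. -/
lemma coord_mem_L (hKinv : ∀ σ : Equiv.Perm (Fin (m + 3)), ∀ v ∈ K, v ∘ σ ∈ K)
    {k : Fin (m + 3) → G} (hk : k ∈ K) (i : Fin (m + 3)) : k i ∈ Lsub K := by
  refine mem_L_iff.mpr ⟨k ∘ Equiv.swap 0 i, hKinv _ k hk, ?_⟩
  simp [Equiv.swap_apply_left]

/-- Elements of `L` are central modulo `N`. -/
lemma L_comm (hKn : K.Normal) {x : G} (hx : x ∈ Lsub K) (a : G) :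
    x * a * x⁻¹ * a⁻¹ ∈ Nsub K := by
  obtain ⟨k, hk, rfl⟩ := mem_L_iff.mp hx
  have h1 : (Pi.mulSingle (0 : Fin (m + 3)) a) * k * (Pi.mulSingle (0 : Fin (m + 3)) a)⁻¹
      * k⁻¹ ∈ K := by
    exact K.mul_mem (hKn.conj_mem k hk _) (K.inv_mem hk)
  have h2 : (Pi.mulSingle (0 : Fin (m + 3)) a) * k * (Pi.mulSingle (0 : Fin (m + 3)) a)⁻¹
      * k⁻¹ = Pi.mulSingle (0 : Fin (m + 3)) (a * k 0 * a⁻¹ * (k 0)⁻¹) := by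
    funext i
    by_cases h : i = 0
    · subst h; simp [Pi.mulSingle_apply]
    · simp [Pi.mulSingle_apply, h]
  rw [h2] at h1
  have h3 : a * k 0 * a⁻¹ * (k 0)⁻¹ ∈ Nsub K := h1
  have h4 := (Nsub K).inv_mem h3
  have : (a * k 0 * a⁻¹ * (k 0)⁻¹)⁻¹ = k 0 * a * (k 0)⁻¹ * a⁻¹ := by group
  rwa [this] at h4

end Aux2
section Aux3
variable {m : ℕ} {K : Subgroup (Fin (m + 3) → G)}

lemma mk_comm (hKn : K.Normal) {x : G} (hx : x ∈ Lsub K) (q : G ⧸ Nsub K) :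
    haveI : (Nsub K).Normal := hKn.comap _
    Commute (QuotientGroup.mk x) q := by
  haveI : (Nsub K).Normal := hKn.comap _
  induction q using QuotientGroup.induction_on with
  | H a =>
    have h := this.conj_mem _ (L_comm hKn ((Lsub K).inv_mem hx) a) a⁻¹
    have e : a⁻¹ * (x⁻¹ * a * x⁻¹⁻¹ * a⁻¹) * a⁻¹⁻¹ = (x * a)⁻¹ * (a * x) := by group
    rw [e] at h
    show QuotientGroup.mk x * QuotientGroup.mk a = QuotientGroup.mk a * QuotientGroup.mk x
    rw [← QuotientGroup.mk_mul, ← QuotientGroup.mk_mul]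
    exact (QuotientGroup.eq).mpr h
end Aux3
section Aux4
variable {m : ℕ} {K : Subgroup (Fin (m + 3) → G)}

/-- Lemma B: differences of coordinates of elements of `K` lie in `M`. -/
lemma pair_mem_M (hKinv : ∀ σ : Equiv.Perm (Fin (m + 3)), ∀ v ∈ K, v ∘ σ ∈ K)
    {k : Fin (m + 3) → G} (hk : k ∈ K) (i j : Fin (m + 3)) :
    k i * (k j)⁻¹ ∈ Msub K := by
  by_cases hij : i = j
  · subst hij; simpa using (Msub K).one_mem
  · set d : Fin (m + 3) → G := k * (k ∘ Equiv.swap i j)⁻¹ with hd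
    have hdK : d ∈ K := K.mul_mem hk (K.inv_mem (hKinv _ k hk))
    have hd0 : ∀ l, l ≠ i → l ≠ j → d l = 1 := by
      intro l h1 h2
      simp [hd, Pi.mul_apply, Pi.inv_apply, Function.comp,
        Equiv.swap_apply_of_ne_of_ne h1 h2]
    set σ₁ : Equiv.Perm (Fin (m + 3)) := Equiv.swap 0 i with hσ₁
    set σ₂ : Equiv.Perm (Fin (m + 3)) := Equiv.swap 1 (σ₁.symm j) with hσ₂
    set σ : Equiv.Perm (Fin (m + 3)) := σ₂.trans σ₁ with hσ
    have hs0 : σ 0 = i := by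
      have h20 : σ₂ 0 = 0 := by
        apply Equiv.swap_apply_of_ne_of_ne
        · exact zero_ne_one
        · intro h
          exact hij (by simpa [hσ₁, Equiv.swap_apply_left] using congrArg σ₁ h)
      simp [hσ, Equiv.trans_apply, h20, hσ₁, Equiv.swap_apply_left]
    have hs1 : σ 1 = j := by
      simp [hσ, hσ₂, Equiv.trans_apply, Equiv.swap_apply_left]
    refine mem_M_iff.mpr ⟨d ∘ σ, ⟨hKinv _ d hdK, ?_⟩, ?_⟩
    · intro l h1 h2
      refine hd0 (σ l) ?_ ?_
      · rw [← hs0]; exact fun h => h1 (σ.injective h)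
      · rw [← hs1]; exact fun h => h2 (σ.injective h)
    · show d (σ 0) = k i * (k j)⁻¹
      rw [hs0]
      simp [hd, Pi.mul_apply, Pi.inv_apply, Function.comp, Equiv.swap_apply_left]

/-- `M` is normal in `G`. -/
lemma M_conj (hKn : K.Normal) {a : G} (ha : a ∈ Msub K) (b : G) :
    b * a * b⁻¹ ∈ Msub K := by
  obtain ⟨v, ⟨hvK, hv1⟩, hv0⟩ := mem_M_iff.mp ha
  refine mem_M_iff.mpr ⟨(Pi.mulSingle (0 : Fin (m+3)) b) * v * (Pi.mulSingle (0 : Fin (m+3)) b)⁻¹,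
    ⟨hKn.conj_mem v hvK _, ?_⟩, ?_⟩
  · intro i h1 h2
    simp [Pi.mul_apply, Pi.inv_apply, Pi.mulSingle_apply, h1, hv1 i h1 h2]
  · simp [Pi.mul_apply, Pi.inv_apply, Pi.mulSingle_apply, hv0]

lemma M_le_L {a : G} (ha : a ∈ Msub K) : a ∈ Lsub K := by
  obtain ⟨v, ⟨hvK, _⟩, hv0⟩ := mem_M_iff.mp ha
  exact mem_L_iff.mpr ⟨v, hvK, hv0⟩

/-- The basic supported-on-`{0,i}` elements of `K` built from `M`. -/
lemma E_mem (hKinv : ∀ σ : Equiv.Perm (Fin (m + 3)), ∀ v ∈ K, v ∘ σ ∈ K)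
    {a : G} (ha : a ∈ Msub K) {i : Fin (m + 3)} (hi : i ≠ 0) :
    (fun l : Fin (m + 3) => if l = 0 then a⁻¹ else if l = i then a else 1) ∈ K := by
  obtain ⟨v, ⟨hvK, hv1⟩, hv0⟩ := mem_M_iff.mp ha
  set e : Fin (m + 3) → G := v * (v ∘ Equiv.swap 0 2)⁻¹ with he
  have heK : e ∈ K := K.mul_mem hvK (K.inv_mem (hKinv _ v hvK))
  have heval : e = fun l => if l = 0 then a else if l = 2 then a⁻¹ else 1 := by
    funext l
    by_cases h0 : l = 0
    · subst h0
      simp [he, Pi.mul_apply, Pi.inv_apply, Function.comp, Equiv.swap_apply_left, hv0,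
        hv1 2 fin2_ne_zero fin2_ne_one]
    · by_cases h2 : l = 2
      · subst h2
        simp [he, Pi.mul_apply, Pi.inv_apply, Function.comp, Equiv.swap_apply_right, hv0,
          hv1 2 fin2_ne_zero fin2_ne_one, if_neg fin2_ne_zero]
      · simp [he, Pi.mul_apply, Pi.inv_apply, Function.comp,
          Equiv.swap_apply_of_ne_of_ne h0 h2, h0, h2]
  have h2 : e⁻¹ ∘ Equiv.swap 2 i ∈ K := hKinv _ _ (K.inv_mem heK)
  have : e⁻¹ ∘ Equiv.swap 2 i
      = fun l : Fin (m + 3) => if l = 0 then a⁻¹ else if l = i then a else 1 := by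
    funext l
    by_cases h0 : l = 0
    · subst h0
      rw [Function.comp_apply, Equiv.swap_apply_of_ne_of_ne (Ne.symm fin2_ne_zero) (Ne.symm hi)]
      simp [heval, Pi.inv_apply]
    · by_cases hli : l = i
      · subst hli
        rw [Function.comp_apply, Equiv.swap_apply_right]
        simp [heval, Pi.inv_apply, if_neg fin2_ne_zero, if_neg h0, if_neg hi]
      · by_cases hl2 : l = 2
        · subst hl2
          rw [Function.comp_apply, Equiv.swap_apply_left]
          simp [heval, Pi.inv_apply, if_neg h0, if_neg hli, if_neg hi,
            if_neg (Ne.symm hli)]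
        · rw [Function.comp_apply, Equiv.swap_apply_of_ne_of_ne hl2 hli]
          simp [heval, Pi.inv_apply, if_neg h0, if_neg hl2, if_neg hli]
  rwa [this] at h2

end Aux4
section Aux5
variable {m : ℕ} {K : Subgroup (Fin (m + 3) → G)}

/-- Well-definedness: two elements of `K` agreeing away from coordinate `0` have
`N`-equivalent `0`-coordinates. -/
lemma wd (hKn : K.Normal) {u v : Fin (m + 3) → G} (hu : u ∈ K) (hv : v ∈ K)
    (h : ∀ i : Fin (m + 3), i ≠ 0 → u i = v i) :
    haveI : (Nsub K).Normal := hKn.comap _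
    (QuotientGroup.mk (u 0) : G ⧸ Nsub K) = QuotientGroup.mk (v 0) := by
  haveI : (Nsub K).Normal := hKn.comap _
  have h1 : u * v⁻¹ ∈ K := K.mul_mem hu (K.inv_mem hv)
  have h2 : u * v⁻¹ = Pi.mulSingle (0 : Fin (m + 3)) (u 0 * (v 0)⁻¹) := by
    funext i
    by_cases h0 : i = 0
    · subst h0; simp [Pi.mulSingle_apply]
    · simp [Pi.mulSingle_apply, h0, h i h0]
  rw [h2] at h1
  have h3 : u 0 * (v 0)⁻¹ ∈ Nsub K := h1
  have h4 : (u 0)⁻¹ * (u 0 * (v 0)⁻¹) * (u 0)⁻¹⁻¹ ∈ Nsub K := this.conj_mem _ h3 _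
  have h5 : (u 0)⁻¹ * (u 0 * (v 0)⁻¹) * (u 0)⁻¹⁻¹ = ((u 0)⁻¹ * v 0)⁻¹ := by group
  rw [h5] at h4
  exact (QuotientGroup.eq).mpr (by simpa using (Nsub K).inv_mem h4)

lemma cl1 {H : Type*} [Group H] (c : H) (hc : ∀ y, Commute c y) :
    ∀ l : List H, (l.map (fun x => x * c)).prod = l.prod * c ^ l.length := by
  intro l
  induction l with
  | nil => simp
  | cons a l ih =>
    simp only [List.map_cons, List.prod_cons, ih, List.length_cons, pow_succ]
    calc a * c * (l.prod * c ^ l.length)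
        = a * (c * l.prod) * c ^ l.length := by group
      _ = a * (l.prod * c) * c ^ l.length := by rw [(hc l.prod).eq]
      _ = a * l.prod * (c ^ l.length * c) := by group

lemma cl2 {H : Type*} [Group H] :
    ∀ l : List H, (∀ x ∈ l, ∀ y, Commute x y) →
      (l.map (fun x => x⁻¹)).prod = l.prod⁻¹ := by
  intro l
  induction l with
  | nil => simp
  | cons a l ih =>
    intro h
    simp only [List.map_cons, List.prod_cons, mul_inv_rev]
    rw [ih (fun x hx => h x (List.mem_cons_of_mem a hx))]
    exact ((h a List.mem_cons_self l.prod⁻¹).inv_left).eq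

end Aux5
section Build
variable {m : ℕ} {K : Subgroup (Fin (m + 3) → G)}

lemma build (hKn : K.Normal)
    (hKinv : ∀ σ : Equiv.Perm (Fin (m + 3)), ∀ v ∈ K, v ∘ σ ∈ K)
    {w : Fin (m + 3) → G} (hw : w ∈ K) (c : Fin (m + 3) → G)
    (hc : ∀ i : Fin (m + 3), i ≠ 0 → c i * (w i)⁻¹ ∈ Msub K) :
    haveI : (Nsub K).Normal := hKn.comap _
    ∃ z ∈ K, (∀ i : Fin (m + 3), i ≠ 0 → z i = c i) ∧
      (QuotientGroup.mk (z 0) : G ⧸ Nsub K) = QuotientGroup.mk (w 0) *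
        (List.ofFn fun i : Fin (m + 2) =>
          (QuotientGroup.mk (w i.succ) : G ⧸ Nsub K) * (QuotientGroup.mk (c i.succ))⁻¹).prod := by
  haveI inst : (Nsub K).Normal := hKn.comap _
  set F : List (G ⧸ Nsub K) := List.ofFn fun i : Fin (m + 2) =>
    (QuotientGroup.mk (w i.succ) : G ⧸ Nsub K) * (QuotientGroup.mk (c i.succ))⁻¹ with hF
  have key : ∀ t : ℕ, t ≤ m + 2 → ∃ z ∈ K,
      (∀ i : Fin (m + 3), i ≠ 0 → i.val ≤ t → z i = c i) ∧
      (∀ i : Fin (m + 3), t < i.val → z i = w i) ∧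
      (QuotientGroup.mk (z 0) : G ⧸ Nsub K) = QuotientGroup.mk (w 0) * (F.take t).prod := by
    intro t
    induction t with
    | zero =>
      intro _
      refine ⟨w, hw, ?_, fun i _ => rfl, by simp⟩
      intro i hi hle
      exact absurd (Fin.ext (by simpa using Nat.le_zero.mp hle)) hi
    | succ t ih =>
      intro ht
      obtain ⟨z, hzK, hz1, hz2, hz0⟩ := ih (by omega)
      set i₀ : Fin (m + 3) := ⟨t + 1, by omega⟩ with hi₀
      have hi₀0 : i₀ ≠ 0 := by simp [hi₀, Fin.ext_iff]
      have hzi₀ : z i₀ = w i₀ := hz2 i₀ (by simp [hi₀])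
      have hb : c i₀ * (w i₀)⁻¹ ∈ Msub K := hc i₀ hi₀0
      set b := c i₀ * (w i₀)⁻¹ with hbdef
      set z' : Fin (m + 3) → G :=
        (fun l : Fin (m + 3) => if l = 0 then b⁻¹ else if l = i₀ then b else 1) * z with hz'
      have hz'K : z' ∈ K := K.mul_mem (E_mem hKinv hb hi₀0) hzK
      refine ⟨z', hz'K, ?_, ?_, ?_⟩
      · intro i hi hle
        by_cases h : i = i₀
        · subst h
          simp only [hz', Pi.mul_apply, if_neg hi₀0, eq_self_iff_true, if_true, hzi₀, hbdef]
          group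
        · have hle' : i.val ≤ t := by
            have : i.val ≠ t + 1 := fun hv => h (Fin.ext hv)
            omega
          simp only [hz', Pi.mul_apply, if_neg hi, if_neg h, one_mul]
          exact hz1 i hi hle'
      · intro i hgt
        have h0 : i ≠ 0 := by
          intro h; subst h
          simp only [Fin.val_zero] at hgt; omega
        have hne : i ≠ i₀ := by
          intro h; subst h
          simp only [hi₀] at hgt; omega
        simp only [hz', Pi.mul_apply, if_neg h0, if_neg hne, one_mul]
        exact hz2 i (by omega)
      · have hzval : z' 0 = b⁻¹ * z 0 := by simp [hz', Pi.mul_apply]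
        have hbL : b ∈ Lsub K := M_le_L hb
        have hcomm := mk_comm hKn hbL
        have hlt : t < F.length := by
          simp only [hF, List.length_ofFn]; omega
        have hget : F[t] = (QuotientGroup.mk (w i₀) : G ⧸ Nsub K) *
            (QuotientGroup.mk (c i₀))⁻¹ := by
          simp only [hF, List.getElem_ofFn]
          rfl
        have hbinv : ((QuotientGroup.mk b : G ⧸ Nsub K))⁻¹ =
            (QuotientGroup.mk (w i₀) : G ⧸ Nsub K) * (QuotientGroup.mk (c i₀))⁻¹ := by
          rw [hbdef]
          rw [QuotientGroup.mk_mul, QuotientGroup.mk_inv]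
          group
        calc (QuotientGroup.mk (z' 0) : G ⧸ Nsub K)
            = (QuotientGroup.mk b)⁻¹ * QuotientGroup.mk (z 0) := by
              rw [hzval, QuotientGroup.mk_mul, QuotientGroup.mk_inv]
          _ = QuotientGroup.mk (z 0) * (QuotientGroup.mk b)⁻¹ :=
              ((hcomm _).inv_left).eq
          _ = QuotientGroup.mk (w 0) * (F.take t).prod * F[t] := by
              rw [hz0, hbinv, hget]
          _ = QuotientGroup.mk (w 0) * (F.take (t + 1)).prod := by
              rw [List.prod_take_succ F t hlt, mul_assoc]
  obtain ⟨z, hzK, hz1, _, hz0⟩ := key (m + 2) le_rfl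
  refine ⟨z, hzK, fun i hi => hz1 i hi (by omega), ?_⟩
  rwa [List.take_of_length_le (by simp [hF])] at hz0

end Build
section Rep
variable {m : ℕ} {K : Subgroup (Fin (m + 3) → G)}

lemma exists_rep (hKn : K.Normal)
    (hKinv : ∀ σ : Equiv.Perm (Fin (m + 3)), ∀ v ∈ K, v ∘ σ ∈ K)
    {k : Fin (m + 3) → G} (hk : k ∈ K) :
    haveI : (Nsub K).Normal := hKn.comap _
    ∃ z ∈ K, (∀ i : Fin (m + 3), i ≠ 0 → z i = k 0) ∧
      (QuotientGroup.mk (z 0) : G ⧸ Nsub K) =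
        QuotientGroup.mk (k 0 ^ (2 - (m + 3 : ℤ)) * (List.ofFn k).tail.prod) := by
  haveI inst : (Nsub K).Normal := hKn.comap _
  have hc : ∀ i : Fin (m + 3), i ≠ 0 → (fun _ : Fin (m + 3) => k 0) i * (k i)⁻¹ ∈ Msub K :=
    fun i _ => pair_mem_M hKinv hk 0 i
  obtain ⟨z, hzK, hz1, hz0⟩ := build hKn hKinv hk (fun _ => k 0) hc
  refine ⟨z, hzK, hz1, ?_⟩
  rw [hz0]
  set x : G ⧸ Nsub K := QuotientGroup.mk (k 0) with hx
  have hcomm : ∀ q : G ⧸ Nsub K, Commute x q := mk_comm hKn (coord_mem_L hKinv hk 0)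
  set T : G ⧸ Nsub K :=
    (List.ofFn fun i : Fin (m + 2) => (QuotientGroup.mk (k i.succ) : G ⧸ Nsub K)).prod with hT
  have h1 : (List.ofFn fun i : Fin (m + 2) =>
      (QuotientGroup.mk (k i.succ) : G ⧸ Nsub K) * x⁻¹).prod = T * x⁻¹ ^ (m + 2) := by
    have hl : (List.ofFn fun i : Fin (m + 2) =>
        (QuotientGroup.mk (k i.succ) : G ⧸ Nsub K) * x⁻¹)
        = (List.ofFn fun i : Fin (m + 2) =>
            (QuotientGroup.mk (k i.succ) : G ⧸ Nsub K)).map (fun q => q * x⁻¹) := by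
      rw [List.map_ofFn]; rfl
    rw [hl, cl1 x⁻¹ (fun y => (hcomm y).inv_left), List.length_ofFn, hT]
  have htail : (QuotientGroup.mk ((List.ofFn k).tail.prod) : G ⧸ Nsub K) = T := by
    rw [← QuotientGroup.mk'_apply (Nsub K), map_list_prod]
    rw [hT]
    congr 1
    rw [List.ofFn_succ, List.tail_cons, List.map_ofFn]
    rfl
  rw [QuotientGroup.mk_mul, QuotientGroup.mk_zpow, htail, h1]
  rw [← ((hcomm T).inv_left.pow_left (m + 2)).eq, ← mul_assoc]
  congr 1
  group
  rw [hx]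

end Rep
/-- Let `m ≥ 3` and `K ⊴ G^m` a permutation-invariant normal subgroup, with `L`, `M`,
`N` as above.  Then the map `φ : L → L/N` sending `g` to `yN` where `(y,g,…,g) ∈ K` is a
well-defined group homomorphism; its restriction to `M` is `g ↦ g^{1−m}N`; and
`(k_1,…,k_m) ∈ K` iff `k_1 M = ⋯ = k_m M` and `k_1 φ = k_1^{2−m} k_2 ⋯ k_m N`. -/
theorem phi_homomorphism (G : Type*) [Group G] (m : ℕ)
    (K : Subgroup (Fin (m + 3) → G)) (hKn : K.Normal)
    (hKinv : ∀ σ : Equiv.Perm (Fin (m + 3)), ∀ v ∈ K, v ∘ σ ∈ K) :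
    haveI : (Nsub K).Normal := hKn.comap _
    ∃ φ : (Lsub K) →* (G ⧸ Nsub K),
      (∀ g : Lsub K, ∃ y : G, (fun i : Fin (m + 3) => if i = 0 then y else (g : G)) ∈ K) ∧
      (∀ (g : Lsub K) (y : G),
        (fun i : Fin (m + 3) => if i = 0 then y else (g : G)) ∈ K →
          φ g = QuotientGroup.mk y) ∧
      (∀ g : Lsub K, (g : G) ∈ Msub K →
        φ g = QuotientGroup.mk ((g : G) ^ (1 - (m + 3 : ℤ)))) ∧
      (∀ k : Fin (m + 3) → G, k ∈ K ↔
        ((∀ i j : Fin (m + 3), (k i)⁻¹ * k j ∈ Msub K) ∧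
          ∃ h0 : k 0 ∈ Lsub K, φ ⟨k 0, h0⟩ =
            QuotientGroup.mk (k 0 ^ (2 - (m + 3 : ℤ)) * (List.ofFn k).tail.prod))) := by
  haveI inst : (Nsub K).Normal := hKn.comap _
  -- existence of representatives
  have hex : ∀ g : Lsub K, ∃ y : G,
      (fun i : Fin (m + 3) => if i = 0 then y else (g : G)) ∈ K := by
    rintro ⟨g, hg⟩
    obtain ⟨k, hk, hk0⟩ := mem_L_iff.mp hg
    obtain ⟨z, hzK, hz1, -⟩ := exists_rep hKn hKinv hk
    refine ⟨z 0, ?_⟩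
    have he : (fun i : Fin (m + 3) => if i = 0 then z 0 else g) = z := by
      funext i
      by_cases h : i = 0
      · subst h; simp
      · simp only [if_neg h, hz1 i h, hk0]
    rw [he]; exact hzK
  -- well-definedness
  have hwd : ∀ (g : Lsub K) (y y' : G),
      (fun i : Fin (m + 3) => if i = 0 then y else (g : G)) ∈ K →
      (fun i : Fin (m + 3) => if i = 0 then y' else (g : G)) ∈ K →
      (QuotientGroup.mk y : G ⧸ Nsub K) = QuotientGroup.mk y' := by
    intro g y y' h1 h2
    have := wd hKn h1 h2 (fun i hi => by simp [hi])
    simpa using this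
  set φ₀ : Lsub K → G ⧸ Nsub K := fun g => QuotientGroup.mk (Classical.choose (hex g)) with hφ₀
  have hspec : ∀ g : Lsub K,
      (fun i : Fin (m + 3) => if i = 0 then Classical.choose (hex g) else (g : G)) ∈ K :=
    fun g => Classical.choose_spec (hex g)
  have hval : ∀ (g : Lsub K) (y : G),
      (fun i : Fin (m + 3) => if i = 0 then y else (g : G)) ∈ K → φ₀ g = QuotientGroup.mk y :=
    fun g y h => hwd g _ y (hspec g) h
  have hmul : ∀ g g' : Lsub K, φ₀ (g * g') = φ₀ g * φ₀ g' := by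
    intro g g'
    have h1 := hspec g
    have h2 := hspec g'
    have h3 : (fun i : Fin (m + 3) =>
        if i = 0 then Classical.choose (hex g) * Classical.choose (hex g')
        else ((g * g' : Lsub K) : G)) ∈ K := by
      have := K.mul_mem h1 h2
      convert this using 1
      funext i
      by_cases h : i = 0
      · subst h; simp
      · simp [h]
    rw [hval (g * g') _ h3, QuotientGroup.mk_mul]
  refine ⟨MonoidHom.mk' φ₀ hmul, hex, fun g y h => hval g y h, ?_, ?_⟩
  · -- restriction to M
    rintro ⟨g, hgL⟩ hgM
    obtain ⟨z, hzK, hz1, hz0⟩ := build hKn hKinv K.one_mem (fun _ => g)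
      (fun i _ => by simpa using hgM)
    have hrep : (fun i : Fin (m + 3) => if i = 0 then z 0 else g) = z := by
      funext i
      by_cases h : i = 0
      · subst h; simp
      · simp only [if_neg h, hz1 i h]
    have hφg : φ₀ ⟨g, hgL⟩ = QuotientGroup.mk (z 0) :=
      hval _ _ (by rw [show ((⟨g, hgL⟩ : Lsub K) : G) = g from rfl, hrep]; exact hzK)
    show φ₀ ⟨g, hgL⟩ = _
    rw [hφg, hz0]
    have : (List.ofFn fun i : Fin (m + 2) =>
        (QuotientGroup.mk ((1 : Fin (m + 3) → G) i.succ) : G ⧸ Nsub K) *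
          (QuotientGroup.mk g)⁻¹)
        = List.replicate (m + 2) ((QuotientGroup.mk g : G ⧸ Nsub K))⁻¹ := by
      rw [← List.ofFn_const]
      congr 1
      funext i
      simp
    rw [this, List.prod_replicate]
    simp only [Pi.one_apply, QuotientGroup.mk_one, one_mul]
    rw [QuotientGroup.mk_zpow]
    group
  · -- the membership criterion
    intro k
    constructor
    · intro hk
      refine ⟨?_, coord_mem_L hKinv hk 0, ?_⟩
      · intro i j
        have h := M_conj hKn (pair_mem_M hKinv hk j i) (k i)⁻¹
        convert h using 1
        group
      · obtain ⟨z, hzK, hz1, hz0⟩ := exists_rep hKn hKinv hk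
        have hrep : (fun i : Fin (m + 3) =>
            if i = 0 then z 0 else ((⟨k 0, coord_mem_L hKinv hk 0⟩ : Lsub K) : G)) = z := by
          funext i
          by_cases h : i = 0
          · subst h; simp
          · simp only [if_neg h, hz1 i h]
        have : φ₀ ⟨k 0, coord_mem_L hKinv hk 0⟩ = QuotientGroup.mk (z 0) :=
          hval _ _ (by rw [hrep]; exact hzK)
        show φ₀ _ = _
        rw [this, hz0]
    · rintro ⟨hM, h0, hφ⟩
      obtain ⟨y, hy⟩ := hex ⟨k 0, h0⟩
      have hyval : φ₀ ⟨k 0, h0⟩ = QuotientGroup.mk y := hval _ _ hy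
      have hy2 : (QuotientGroup.mk y : G ⧸ Nsub K) =
          QuotientGroup.mk (k 0 ^ (2 - (m + 3 : ℤ)) * (List.ofFn k).tail.prod) := by
        rw [← hyval]; exact hφ
      set w : Fin (m + 3) → G := fun i => if i = 0 then y else k 0 with hw
      have hwK : w ∈ K := hy
      have hkL : ∀ j, k j ∈ Lsub K := by
        intro j
        have h := (Lsub K).mul_mem h0 (M_le_L (hM 0 j))
        simpa using h
      have hc : ∀ i : Fin (m + 3), i ≠ 0 → k i * (w i)⁻¹ ∈ Msub K := by
        intro i hi
        have h1 : (k 0)⁻¹ * k i ∈ Msub K := by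
          have h := (Msub K).inv_mem (hM i 0)
          simpa using h
        have h2 := M_conj hKn h1 (k 0)
        have he : k 0 * ((k 0)⁻¹ * k i) * (k 0)⁻¹ = k i * (k 0)⁻¹ := by group
        rw [he] at h2
        simpa [hw, if_neg hi] using h2
      obtain ⟨z, hzK, hz1, hz0⟩ := build hKn hKinv hwK k hc
      have hw0 : w 0 = y := by simp [hw]
      have hwsucc : ∀ i : Fin (m + 2), w i.succ = k 0 := fun i => by
        simp [hw, Fin.succ_ne_zero]
      set x : G ⧸ Nsub K := QuotientGroup.mk (k 0) with hx
      have hcommx : ∀ q, Commute x q := mk_comm hKn h0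
      set T : G ⧸ Nsub K :=
        (List.ofFn fun i : Fin (m + 2) => (QuotientGroup.mk (k i.succ) : G ⧸ Nsub K)).prod
        with hT
      have htail : (QuotientGroup.mk ((List.ofFn k).tail.prod) : G ⧸ Nsub K) = T := by
        rw [← QuotientGroup.mk'_apply (Nsub K), map_list_prod, hT]
        congr 1
        rw [List.ofFn_succ, List.tail_cons, List.map_ofFn]
        rfl
      have hprod : (List.ofFn fun i : Fin (m + 2) =>
          (QuotientGroup.mk (w i.succ) : G ⧸ Nsub K) * (QuotientGroup.mk (k i.succ))⁻¹).prod
          = T⁻¹ * x ^ (m + 2) := by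
        have e1 : (List.ofFn fun i : Fin (m + 2) =>
            (QuotientGroup.mk (w i.succ) : G ⧸ Nsub K) * (QuotientGroup.mk (k i.succ))⁻¹)
            = List.ofFn fun i : Fin (m + 2) =>
                ((QuotientGroup.mk (k i.succ) : G ⧸ Nsub K))⁻¹ * x := by
          congr 1
          funext i
          rw [hwsucc i]
          exact ((mk_comm hKn (hkL i.succ) x).inv_left.eq).symm
        have e2 : (List.ofFn fun i : Fin (m + 2) =>
            ((QuotientGroup.mk (k i.succ) : G ⧸ Nsub K))⁻¹ * x)
            = (List.ofFn fun i : Fin (m + 2) =>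
                ((QuotientGroup.mk (k i.succ) : G ⧸ Nsub K))⁻¹).map (fun q => q * x) := by
          rw [List.map_ofFn]; rfl
        have e3 : (List.ofFn fun i : Fin (m + 2) =>
            ((QuotientGroup.mk (k i.succ) : G ⧸ Nsub K))⁻¹)
            = (List.ofFn fun i : Fin (m + 2) =>
                (QuotientGroup.mk (k i.succ) : G ⧸ Nsub K)).map (fun q => q⁻¹) := by
          rw [List.map_ofFn]; rfl
        have hcent : ∀ q ∈ (List.ofFn fun i : Fin (m + 2) =>
            (QuotientGroup.mk (k i.succ) : G ⧸ Nsub K)), ∀ y', Commute q y' := by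
          intro q hq y'
          obtain ⟨i, rfl⟩ := List.mem_ofFn.mp hq
          exact mk_comm hKn (hkL i.succ) y'
        rw [e1, e2, cl1 x hcommx, List.length_ofFn, e3, cl2 _ hcent, hT]
      have hz0' : (QuotientGroup.mk (z 0) : G ⧸ Nsub K) = x := by
        rw [hz0, hprod, hw0, hy2, QuotientGroup.mk_mul, QuotientGroup.mk_zpow, htail]
        rw [mul_assoc, mul_inv_cancel_left, ← zpow_natCast x (m + 2), ← zpow_add]
        have he : (2 - (m + 3 : ℤ)) + ((m + 2 : ℕ) : ℤ) = 1 := by push_cast; ring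
        rw [he, zpow_one]
      have hN : (z 0)⁻¹ * k 0 ∈ Nsub K := QuotientGroup.eq.mp hz0'
      have hkz : k = z * Pi.mulSingle (0 : Fin (m + 3)) ((z 0)⁻¹ * k 0) := by
        funext i
        by_cases h : i = 0
        · subst h
          simp [Pi.mul_apply, Pi.mulSingle_apply]
        · simp [Pi.mul_apply, Pi.mulSingle_apply, h, hz1 i h]
      rw [hkz]
      exact K.mul_mem hzK hN
end

section
/- Let m ≥ 3 and let (L, M, N, φ) be an m-invariant quadruple for G. Then K_m(L,M,N,φ) = {(g_1,...,g_m) ∈ L^m : g_1 M = ... = g_m M and g_1 φ = g_1^{2−m} g_2 ⋯ g_m N} is a permutation-invariant normal subgroup of G^m. -/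
/-- An `m`-invariant quadruple for `G`: normal subgroups `N ≤ M ≤ L` of `G` with
`[G,L] ⊆ N`, together with an `(LMNm)`-homomorphism `φ : L → L/N`, i.e. a homomorphism
(valued in `L/N ⊆ G/N`) whose restriction to `M` is `g ↦ g^{1−m}N` and such that
`gφ = hN` implies `gM = hM`. -/
structure InvQuadruple (G : Type*) [Group G] (m : ℕ) where
  L : Subgroup G
  M : Subgroup G
  N : Subgroup G
  hLn : L.Normal
  hMn : M.Normal
  [hNn : N.Normal]
  hNM : N ≤ M
  hML : M ≤ L
  hcomm : ∀ g : G, ∀ l ∈ L, g * l * g⁻¹ * l⁻¹ ∈ N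
  φ : L →* G ⧸ N
  himg : ∀ l : L, ∃ x ∈ L, φ l = QuotientGroup.mk x
  hMres : ∀ l : L, (l : G) ∈ M → φ l = QuotientGroup.mk ((l : G) ^ (1 - (m : ℤ)))
  hfib : ∀ (l : L) (y : G), φ l = QuotientGroup.mk y → y⁻¹ * (l : G) ∈ M

/-- `K_m(L,M,N,φ) = {(g_1,…,g_m) ∈ L^m : g_1 M = ⋯ = g_m M, g_1 φ = g_1^{2−m} g_2 ⋯ g_m N}`. -/
def KmSet {G : Type*} [Group G] {m : ℕ} [NeZero m] (q : InvQuadruple G m) :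
    Set (Fin m → G) :=
  {k | (∀ i, k i ∈ q.L) ∧ (∀ i j, (k i)⁻¹ * k j ∈ q.M) ∧
    ∃ h0 : k 0 ∈ q.L, q.φ ⟨k 0, h0⟩ =
      QuotientGroup.mk (k 0 ^ (2 - (m : ℤ)) * (List.ofFn k).tail.prod)}

attribute [instance] InvQuadruple.hNn

open scoped IsMulCommutative

namespace KmAux

variable {G : Type*} [Group G] {m : ℕ} (q : InvQuadruple G (m + 3))

lemma cen (l : G) (hl : l ∈ q.L) :
    (QuotientGroup.mk l : G ⧸ q.N) ∈ Subgroup.center (G ⧸ q.N) := by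
  rw [Subgroup.mem_center_iff]
  intro g
  obtain ⟨g, rfl⟩ := QuotientGroup.mk_surjective g
  have h : (QuotientGroup.mk (g * l * g⁻¹ * l⁻¹) : G ⧸ q.N) = 1 :=
    (QuotientGroup.eq_one_iff _).mpr (q.hcomm g l hl)
  have h2 : (QuotientGroup.mk g : G ⧸ q.N) * QuotientGroup.mk l *
      (QuotientGroup.mk g)⁻¹ * (QuotientGroup.mk l)⁻¹ = 1 := by
    simpa [QuotientGroup.mk_mul, QuotientGroup.mk_inv] using h
  exact commutatorElement_eq_one_iff_mul_comm.mp h2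

/-- central lift of the coordinates -/
def Fc {n : ℕ} (k : Fin n → G) (hk : ∀ i, k i ∈ q.L) :
    Fin n → Subgroup.center (G ⧸ q.N) :=
  fun i => ⟨QuotientGroup.mk (k i), cen q _ (hk i)⟩

lemma coe_prod {n : ℕ} (k : Fin n → G) (hk : ∀ i, k i ∈ q.L) :
    (QuotientGroup.mk (List.ofFn k).prod : G ⧸ q.N) = ↑(∏ i, Fc q k hk i) := by
  calc (QuotientGroup.mk (List.ofFn k).prod : G ⧸ q.N)
      = QuotientGroup.mk' q.N (List.ofFn k).prod := rfl
    _ = ((List.ofFn k).map (QuotientGroup.mk' q.N)).prod := (List.prod_hom _ _).symm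
    _ = (List.ofFn (⇑(Subgroup.center (G ⧸ q.N)).subtype ∘ Fc q k hk)).prod := by
        rw [List.map_ofFn]; rfl
    _ = ((List.ofFn (Fc q k hk)).map (Subgroup.center (G ⧸ q.N)).subtype).prod := by
        rw [List.map_ofFn]
    _ = (Subgroup.center (G ⧸ q.N)).subtype (List.ofFn (Fc q k hk)).prod :=
        List.prod_hom _ _
    _ = ↑(∏ i, Fc q k hk i) := by rw [List.prod_ofFn]; rfl


/-- The "target" element of the center. -/
def Tc (k : Fin (m + 3) → G) (hk : ∀ i, k i ∈ q.L) : Subgroup.center (G ⧸ q.N) :=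
  (Fc q k hk 0) ^ (1 - ((m + 3 : ℕ) : ℤ)) * ∏ i, Fc q k hk i

lemma key (k : Fin (m + 3) → G) (hk : ∀ i, k i ∈ q.L) :
    (QuotientGroup.mk (k 0 ^ (2 - ((m + 3 : ℕ) : ℤ)) * (List.ofFn k).tail.prod) : G ⧸ q.N)
      = ↑(Tc q k hk) := by
  have htail : (List.ofFn k).tail = List.ofFn (fun i : Fin (m + 2) => k i.succ) := by
    rw [List.ofFn_succ]; rfl
  have hk' : ∀ i : Fin (m + 2), k i.succ ∈ q.L := fun i => hk i.succ
  have hFc : Fc q (fun i : Fin (m + 2) => k i.succ) hk' = fun i => Fc q k hk i.succ := by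
    funext i; rfl
  rw [htail, QuotientGroup.mk_mul, coe_prod q _ hk', hFc]
  have hsplit : (∏ i, Fc q k hk i) = Fc q k hk 0 * ∏ i : Fin (m + 2), Fc q k hk i.succ :=
    Fin.prod_univ_succ _
  have hexp : (2 - ((m + 3 : ℕ) : ℤ)) = (1 - ((m + 3 : ℕ) : ℤ)) + 1 := by ring
  rw [Tc, hsplit, hexp]
  push_cast [QuotientGroup.mk_zpow]
  rw [zpow_add_one]
  group
  rfl

lemma phi_any (k : Fin (m + 3) → G) (hk : ∀ i, k i ∈ q.L)
    (hM : ∀ i j, (k i)⁻¹ * k j ∈ q.M)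
    (h0 : q.φ ⟨k 0, hk 0⟩ = ↑(Tc q k hk)) (j : Fin (m + 3)) :
    q.φ ⟨k j, hk j⟩ =
      ↑((Fc q k hk j) ^ (1 - ((m + 3 : ℕ) : ℤ)) * ∏ i, Fc q k hk i) := by
  have hd : (k 0)⁻¹ * k j ∈ q.M := hM 0 j
  have hdL : (k 0)⁻¹ * k j ∈ q.L := q.hML hd
  have hsplit : (⟨k j, hk j⟩ : q.L) = ⟨k 0, hk 0⟩ * ⟨(k 0)⁻¹ * k j, hdL⟩ := by
    ext; simp
  set D : Subgroup.center (G ⧸ q.N) := ⟨QuotientGroup.mk ((k 0)⁻¹ * k j), cen q _ hdL⟩ with hD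
  have hFj : Fc q k hk j = Fc q k hk 0 * D := by
    ext
    show (QuotientGroup.mk (k j) : G ⧸ q.N) = QuotientGroup.mk (k 0) * QuotientGroup.mk ((k 0)⁻¹ * k j)
    rw [← QuotientGroup.mk_mul, mul_inv_cancel_left]
  have hres := q.hMres ⟨(k 0)⁻¹ * k j, hdL⟩ hd
  have hDz : (QuotientGroup.mk (((k 0)⁻¹ * k j) ^ (1 - ((m + 3 : ℕ) : ℤ))) : G ⧸ q.N)
      = ↑(D ^ (1 - ((m + 3 : ℕ) : ℤ))) := by
    rw [QuotientGroup.mk_zpow]; rfl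
  rw [hsplit, map_mul, h0, hres, hDz, ← Subgroup.coe_mul]
  congr 1
  rw [Tc, hFj, mul_zpow, mul_right_comm]

/-- perturbation by elements of N preserves membership -/
lemma pert (k w : Fin (m + 3) → G) (hw : ∀ i, w i ∈ q.N)
    (hmem : k ∈ KmSet q) : (fun i => w i * k i) ∈ KmSet q := by
  obtain ⟨h1, h2, h0, heq⟩ := hmem
  have h1' : ∀ i, w i * k i ∈ q.L := fun i => mul_mem (q.hML (q.hNM (hw i))) (h1 i)
  refine ⟨h1', ?_, h1' 0, ?_⟩
  · intro i j
    have : (w i * k i)⁻¹ * (w j * k j)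
        = ((k i)⁻¹ * ((w i)⁻¹ * w j) * (k i)⁻¹⁻¹) * ((k i)⁻¹ * k j) := by group
    rw [this]
    exact mul_mem (q.hNM (q.hNn.conj_mem _ (mul_mem (inv_mem (hw i)) (hw j)) _)) (h2 i j)
  · rw [key q k h1] at heq
    rw [key q _ h1']
    have hFc : Fc q (fun i => w i * k i) h1' = Fc q k h1 := by
      funext i
      ext
      show (QuotientGroup.mk (w i * k i) : G ⧸ q.N) = QuotientGroup.mk (k i)
      rw [QuotientGroup.mk_mul, (QuotientGroup.eq_one_iff _).mpr (hw i), one_mul]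
    have hTc : Tc q (fun i => w i * k i) h1' = Tc q k h1 := by rw [Tc, Tc, hFc]
    rw [hTc]
    have hsplit : (⟨w 0 * k 0, h1' 0⟩ : q.L)
        = ⟨w 0, q.hML (q.hNM (hw 0))⟩ * ⟨k 0, h1 0⟩ := rfl
    rw [hsplit, map_mul]
    have hφw : q.φ ⟨w 0, q.hML (q.hNM (hw 0))⟩ = 1 := by
      rw [q.hMres _ (q.hNM (hw 0))]
      exact (QuotientGroup.eq_one_iff _).mpr (zpow_mem (hw 0) _)
    rw [hφw, one_mul, heq]

end KmAux

/-- Let `m ≥ 3` and `(L, M, N, φ)` an `m`-invariant quadruple for `G`.  Then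
`K_m(L,M,N,φ)` is a permutation-invariant normal subgroup of `G^m`. -/
theorem KmSet_invariant_normal_subgroup (G : Type*) [Group G] (m : ℕ)
    (q : InvQuadruple G (m + 3)) :
    ∃ S : Subgroup (Fin (m + 3) → G),
      (S : Set (Fin (m + 3) → G)) = KmSet q ∧ S.Normal ∧
      ∀ σ : Equiv.Perm (Fin (m + 3)), ∀ v ∈ S, v ∘ σ ∈ S := by
  classical
  have one_mem : (1 : Fin (m + 3) → G) ∈ KmSet q := by
    refine ⟨fun i => one_mem _, fun i j => by simpa using one_mem _, one_mem _, ?_⟩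
    have h1 : (⟨(1 : Fin (m + 3) → G) 0, one_mem _⟩ : q.L) = 1 := rfl
    have h2 : List.ofFn (1 : Fin (m + 3) → G) = List.replicate (m + 3) 1 :=
      List.ofFn_const _ _
    rw [h1, map_one, h2]
    simp
  have mul_mem : ∀ a b : Fin (m + 3) → G, a ∈ KmSet q → b ∈ KmSet q →
      a * b ∈ KmSet q := by
    intro a b ha hb
    obtain ⟨h1a, h2a, h0a, heqa⟩ := ha
    obtain ⟨h1b, h2b, h0b, heqb⟩ := hb
    rw [KmAux.key q a h1a] at heqa
    rw [KmAux.key q b h1b] at heqb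
    have h1 : ∀ i, (a * b) i ∈ q.L := fun i => mul_mem (h1a i) (h1b i)
    refine ⟨h1, ?_, h1 0, ?_⟩
    · intro i j
      have heq : ((a * b) i)⁻¹ * (a * b) j
          = ((b i)⁻¹ * ((a i)⁻¹ * a j) * ((b i)⁻¹)⁻¹) * ((b i)⁻¹ * b j) := by
        simp only [Pi.mul_apply]; group
      rw [heq]
      exact mul_mem (q.hMn.conj_mem _ (h2a i j) _) (h2b i j)
    · rw [KmAux.key q (a * b) h1]
      have hsplit : (⟨(a * b) 0, h1 0⟩ : q.L) = ⟨a 0, h1a 0⟩ * ⟨b 0, h1b 0⟩ := rfl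
      rw [hsplit, map_mul, heqa, heqb, ← Subgroup.coe_mul]
      congr 1
      have hF : KmAux.Fc q (a * b) h1
          = fun i => KmAux.Fc q a h1a i * KmAux.Fc q b h1b i := by
        funext i; ext
        show (QuotientGroup.mk ((a * b) i) : G ⧸ q.N)
          = QuotientGroup.mk (a i) * QuotientGroup.mk (b i)
        rw [Pi.mul_apply, QuotientGroup.mk_mul]
      unfold KmAux.Tc
      simp only [hF]
      rw [Finset.prod_mul_distrib, mul_zpow, mul_mul_mul_comm]
  have inv_mem : ∀ k : Fin (m + 3) → G, k ∈ KmSet q → k⁻¹ ∈ KmSet q := by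
    intro k hk
    obtain ⟨h1, h2, h0, heq⟩ := hk
    rw [KmAux.key q k h1] at heq
    have h1' : ∀ i, k⁻¹ i ∈ q.L := fun i => inv_mem (h1 i)
    refine ⟨h1', ?_, h1' 0, ?_⟩
    · intro i j
      have heq2 : (k⁻¹ i)⁻¹ * k⁻¹ j = k i * ((k j)⁻¹ * k i) * (k i)⁻¹ := by
        simp only [Pi.inv_apply]; group
      rw [heq2]
      exact q.hMn.conj_mem _ (h2 j i) _
    · rw [KmAux.key q k⁻¹ h1']
      have hsplit : (⟨k⁻¹ 0, h1' 0⟩ : q.L) = (⟨k 0, h1 0⟩ : q.L)⁻¹ := rfl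
      rw [hsplit, map_inv, heq]
      have hF : KmAux.Fc q k⁻¹ h1' = fun i => (KmAux.Fc q k h1 i)⁻¹ := by
        funext i; ext
        show (QuotientGroup.mk (k⁻¹ i) : G ⧸ q.N) = (QuotientGroup.mk (k i))⁻¹
        rw [Pi.inv_apply, QuotientGroup.mk_inv]
      rw [← Subgroup.coe_inv]
      congr 1
      unfold KmAux.Tc
      simp only [hF]
      rw [inv_zpow, Finset.prod_inv_distrib, mul_inv]
  refine ⟨{ carrier := KmSet q, one_mem' := one_mem,
            mul_mem' := fun ha hb => mul_mem _ _ ha hb,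
            inv_mem' := fun ha => inv_mem _ ha }, rfl, ?_, ?_⟩
  · constructor
    intro v hv g
    have hv' : v ∈ KmSet q := hv
    show g * v * g⁻¹ ∈ KmSet q
    have hrw : g * v * g⁻¹
        = fun i => (g i * v i * (g i)⁻¹ * (v i)⁻¹) * v i := by
      funext i; simp only [Pi.mul_apply, Pi.inv_apply]; group
    rw [hrw]
    exact KmAux.pert q v _ (fun i => q.hcomm (g i) (v i) (hv'.1 i)) hv'
  · intro σ v hv
    have hv' : v ∈ KmSet q := hv
    obtain ⟨h1, h2, h0, heq⟩ := hv'
    rw [KmAux.key q v h1] at heq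
    show v ∘ σ ∈ KmSet q
    have h1' : ∀ i, (v ∘ σ) i ∈ q.L := fun i => h1 (σ i)
    refine ⟨h1', fun i j => h2 _ _, h1' 0, ?_⟩
    rw [KmAux.key q (v ∘ σ) h1']
    have hF : KmAux.Fc q (v ∘ σ) h1' = fun i => KmAux.Fc q v h1 (σ i) := by
      funext i; rfl
    have hT : KmAux.Tc q (v ∘ σ) h1'
        = (KmAux.Fc q v h1 (σ 0)) ^ (1 - ((m + 3 : ℕ) : ℤ)) * ∏ i, KmAux.Fc q v h1 i := by
      unfold KmAux.Tc
      simp only [hF]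
      rw [Equiv.prod_comp]
    rw [hT]
    exact KmAux.phi_any q v h1 h2 heq (σ 0)
end

section
/- Let H ⋊_φ P be a semidirect product (via antihomomorphism φ : P → Aut H) and (J, Q, ψ) a normal crossed triple. Then L(J,Q,ψ) = {(j·(qψ), q) : j ∈ J, q ∈ Q} is a normal subgroup of H ⋊_φ P if and only if (J, Q, ψ) is strongly normal, i.e. Q ⊴ P, J ⊴ H is φ-invariant, ((qψ)J)^p = ((pqp⁻¹)ψ)J for all q ∈ Q, p ∈ P, and (qψ)·h^q·(qψ)⁻¹ ∈ hJ for all q ∈ Q, h ∈ H. -/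
/-- Usenko-style description of normal subgroups of a semidirect product `H ⋊ P`
(the action of `p ∈ P` on `h ∈ H` being written `h^p = α p h`, so that the product is
`(h,p)(g,q) = (h·g^p, pq)`).  Let `(J, Q, ψ)` be a normal crossed triple, i.e. `J ≤ H`,
`Q ≤ P` and `ψ : Q → H` satisfy:
for all `r, q ∈ Q` there is `j ∈ J` with `(rq)ψ = j·(rψ)·(qψ)^r`, and
`(qψ)·j^q·(qψ)⁻¹ ∈ J` for all `q ∈ Q`, `j ∈ J`.
Then `L(J,Q,ψ) = {(j·(qψ), q) : j ∈ J, q ∈ Q}` (a subgroup, by Usenko's theorem) is a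
normal subgroup of `H ⋊ P` if and only if `(J, Q, ψ)` is strongly normal: `Q ⊴ P`,
`J ⊴ H` is invariant under the action, `((qψ)J)^p = ((pqp⁻¹)ψ)J` for all `q ∈ Q`,
`p ∈ P`, and `(qψ)·h^q·(qψ)⁻¹ ∈ hJ` for all `q ∈ Q`, `h ∈ H`. -/
theorem usenko_normal (H P : Type*) [Group H] [Group P] (α : P →* MulAut H)
    (J : Subgroup H) (Q : Subgroup P) (ψ : Q → H)
    (hcrossed : ∀ r q : Q, ∃ j ∈ J, ψ (r * q) = j * ψ r * α (r : P) (ψ q))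
    (hnormalJ : ∀ q : Q, ∀ j ∈ J, ψ q * α (q : P) j * (ψ q)⁻¹ ∈ J) :
    (∃ S : Subgroup (H ⋊[α] P), S.Normal ∧
        (S : Set (H ⋊[α] P)) = {x | ∃ j ∈ J, ∃ q : Q, x = ⟨j * ψ q, (q : P)⟩}) ↔
    (Q.Normal ∧ J.Normal ∧ (∀ p : P, ∀ j ∈ J, α p j ∈ J) ∧
      (∀ (q : Q) (p : P) (q' : Q), (q' : P) = p * (q : P) * p⁻¹ →
        (ψ q')⁻¹ * α p (ψ q) ∈ J) ∧
      (∀ (q : Q) (h : H), h⁻¹ * (ψ q * α (q : P) h * (ψ q)⁻¹) ∈ J)) := by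
  -- ψ 1 ∈ J, a consequence of the crossed condition
  have hψ1 : ψ 1 ∈ J := by
    obtain ⟨j, hj, h1⟩ := hcrossed 1 1
    rw [one_mul] at h1
    simp only [OneMemClass.coe_one, map_one, MulAut.one_apply] at h1
    have h2 : (j * ψ 1) * ψ 1 = 1 * ψ 1 := by rw [one_mul, ← h1]
    have h3 : j * ψ 1 = 1 := mul_right_cancel h2
    have h4 : ψ 1 = j⁻¹ := eq_inv_of_mul_eq_one_right h3
    rw [h4]; exact J.inv_mem hj
  constructor
  · rintro ⟨S, hN, hS⟩
    have hmem : ∀ x : H ⋊[α] P, x ∈ S ↔ ∃ j ∈ J, ∃ q : Q, x = ⟨j * ψ q, (q : P)⟩ := by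
      intro x
      constructor
      · intro hx
        have : x ∈ (S : Set (H ⋊[α] P)) := hx
        rwa [hS] at this
      · intro hx
        have : x ∈ ({x | ∃ j ∈ J, ∃ q : Q, x = ⟨j * ψ q, (q : P)⟩} : Set (H ⋊[α] P)) := hx
        rwa [← hS] at this
    have hqS : ∀ q : Q, (⟨ψ q, (q : P)⟩ : H ⋊[α] P) ∈ S := fun q =>
      (hmem _).2 ⟨1, J.one_mem, q, by rw [one_mul]⟩
    have hJS : ∀ j ∈ J, (⟨j, 1⟩ : H ⋊[α] P) ∈ S := fun j hj =>
      (hmem _).2 ⟨j * (ψ 1)⁻¹, J.mul_mem hj (J.inv_mem hψ1), 1, by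
        ext <;> simp [mul_assoc]⟩
    -- generic conjugation by (1, p)
    have key : ∀ (p : P) (q : Q), (⟨α p (ψ q), p * q * p⁻¹⟩ : H ⋊[α] P) ∈ S := by
      intro p q
      have h := hN.conj_mem _ (hqS q) ⟨1, p⟩
      have heq : (⟨1, p⟩ : H ⋊[α] P) * ⟨ψ q, (q : P)⟩ * (⟨1, p⟩ : H ⋊[α] P)⁻¹
          = ⟨α p (ψ q), p * q * p⁻¹⟩ := by
        ext <;> simp
      rwa [heq] at h
    -- Q is normal
    have hQnorm : Q.Normal := by
      constructor
      intro n hn p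
      obtain ⟨j, hj, q', hq'⟩ := (hmem _).1 (key p ⟨n, hn⟩)
      have := congrArg SemidirectProduct.right hq'
      simp only at this
      rw [this]
      exact q'.2
    -- conjugation of J-elements by arbitrary (h, p)
    have hJconj : ∀ (h : H) (p : P), ∀ j ∈ J, h * α p j * h⁻¹ ∈ J := by
      intro h p j hj
      have hc := hN.conj_mem _ (hJS j hj) ⟨h, p⟩
      have heq : (⟨h, p⟩ : H ⋊[α] P) * ⟨j, 1⟩ * (⟨h, p⟩ : H ⋊[α] P)⁻¹
          = ⟨h * α p j * h⁻¹, 1⟩ := by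
        ext <;> simp [map_mul, map_inv, MulAut.apply_inv_self, mul_assoc]
      rw [heq] at hc
      obtain ⟨j', hj', q', hq'⟩ := (hmem _).1 hc
      have hr := congrArg SemidirectProduct.right hq'
      simp only at hr
      have hq1 : q' = 1 := by ext; simp [← hr]
      have hl := congrArg SemidirectProduct.left hq'
      simp only at hl
      rw [hq1] at hl
      rw [hl]
      exact J.mul_mem hj' hψ1
    have hJnorm : J.Normal := by
      constructor
      intro j hj h
      have := hJconj h 1 j hj
      simpa using this
    have hinv : ∀ p : P, ∀ j ∈ J, α p j ∈ J := by
      intro p j hj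
      have := hJconj 1 p j hj
      simpa using this
    refine ⟨hQnorm, hJnorm, hinv, ?_, ?_⟩
    · intro q p q' hq'
      obtain ⟨j, hj, q'', hq''⟩ := (hmem _).1 (key p q)
      have hr := congrArg SemidirectProduct.right hq''
      simp only at hr
      have : q'' = q' := by ext; rw [← hr, hq']
      subst this
      have hl := congrArg SemidirectProduct.left hq''
      simp only at hl
      rw [hl]
      have : (ψ q'')⁻¹ * (j * ψ q'') ∈ J := by
        have := hJnorm.conj_mem j hj (ψ q'')⁻¹
        simpa [mul_assoc] using this
      simpa [mul_assoc] using this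
    · intro q h
      have hc := hN.conj_mem _ (hqS q) ⟨h⁻¹, 1⟩
      have heq : (⟨h⁻¹, 1⟩ : H ⋊[α] P) * ⟨ψ q, (q : P)⟩ * (⟨h⁻¹, 1⟩ : H ⋊[α] P)⁻¹
          = ⟨h⁻¹ * ψ q * α (q : P) h, (q : P)⟩ := by
        ext <;> simp [mul_assoc]
      rw [heq] at hc
      obtain ⟨j, hj, q', hq'⟩ := (hmem _).1 hc
      have hr := congrArg SemidirectProduct.right hq'
      simp only at hr
      have hqq : q' = q := by ext; rw [← hr]
      have hl := congrArg SemidirectProduct.left hq'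
      simp only at hl
      rw [hqq] at hl
      have : h⁻¹ * (ψ q * α (q : P) h * (ψ q)⁻¹) = j := by
        rw [← mul_assoc, ← mul_assoc, hl, mul_assoc, mul_inv_cancel, mul_one]
      rw [this]; exact hj
  · rintro ⟨hQ, hJ, hinv, hcomp, hact⟩
    refine ⟨{ carrier := {x | ∃ j ∈ J, ∃ q : Q, x = ⟨j * ψ q, (q : P)⟩}
              one_mem' := ⟨(ψ 1)⁻¹, J.inv_mem hψ1, 1, by ext <;> simp⟩
              mul_mem' := ?_
              inv_mem' := ?_ }, ⟨?_⟩, rfl⟩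
    · rintro a b ⟨j, hj, r, rfl⟩ ⟨k, hk, q, rfl⟩
      obtain ⟨j₀, hj₀, hrq⟩ := hcrossed r q
      refine ⟨j * (ψ r * α (r : P) k * (ψ r)⁻¹) * j₀⁻¹,
        J.mul_mem (J.mul_mem hj (hnormalJ r k hk)) (J.inv_mem hj₀), r * q, ?_⟩
      ext <;> simp [hrq, map_mul, mul_assoc]
    · rintro a ⟨j, hj, q, rfl⟩
      obtain ⟨j₀, hj₀, h1⟩ := hcrossed q q⁻¹
      rw [mul_inv_cancel] at h1
      have hψinv : ψ q⁻¹ = α ((q : P))⁻¹ ((ψ q)⁻¹ * (j₀⁻¹ * ψ 1)) := by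
        have h2 : α (q : P) (ψ q⁻¹) = (ψ q)⁻¹ * (j₀⁻¹ * ψ 1) := by
          rw [h1]; group
        rw [← h2, map_inv]
        simp [MulAut.inv_def]
      refine ⟨α ((q : P))⁻¹ ((ψ q)⁻¹ * (j⁻¹ * (ψ 1)⁻¹ * j₀) * ψ q), ?_, q⁻¹, ?_⟩
      · refine hinv _ _ ?_
        have hm : j⁻¹ * (ψ 1)⁻¹ * j₀ ∈ J :=
          J.mul_mem (J.mul_mem (J.inv_mem hj) (J.inv_mem hψ1)) hj₀
        have := hJ.conj_mem _ hm (ψ q)⁻¹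
        simpa [mul_assoc] using this
      · ext <;> simp [hψinv, map_mul, map_inv, mul_assoc, mul_inv_rev]
    · rintro n ⟨j, hj, q, rfl⟩ g
      obtain ⟨h, p⟩ := g
      have hq' : p * (q : P) * p⁻¹ ∈ Q := hQ.conj_mem q q.2 p
      set q' : Q := ⟨p * (q : P) * p⁻¹, hq'⟩ with hq'def
      have hj₁ : (ψ q')⁻¹ * α p (ψ q) ∈ J := hcomp q p q' rfl
      have hj₂ : h * (ψ q' * α (q' : P) h⁻¹ * (ψ q')⁻¹) ∈ J := by
        have := hact q' h⁻¹
        simpa using this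
      refine ⟨h * (α p j * (ψ q' * ((ψ q')⁻¹ * α p (ψ q)) * (ψ q')⁻¹)) * h⁻¹ *
        (h * (ψ q' * α (q' : P) h⁻¹ * (ψ q')⁻¹)), ?_, q', ?_⟩
      · refine J.mul_mem ?_ hj₂
        refine hJ.conj_mem _ ?_ h
        refine J.mul_mem (hinv p j hj) ?_
        exact hJ.conj_mem _ hj₁ (ψ q')
      · ext <;> simp [hq'def, map_mul, map_inv, MulAut.mul_apply, mul_assoc]
end

section
/- Let m ≥ 3, let (L,M,N,φ) be an m-invariant quadruple for G with K = K_m(L,M,N,φ) the corresponding invariant normal subgroup of G^m, let Q ≠ {1} be a normal subgroup of S_m, and suppose (K, Q, ξ) is a normal subgroup triple for the wreath product G ≀ S_m. Then L = M = G, so K = {(g_1,...,g_m) : g_1 g_2 ⋯ g_m ∈ N}. -/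
/-- Let `m ≥ 3`, `(L,M,N,φ)` an `m`-invariant quadruple for `G` with corresponding
permutation-invariant normal subgroup `K = K_m(L,M,N,φ) ⊴ G^m`, let `Q ≠ {1}` be a
normal subgroup of `S_m`, and suppose `(K, Q, ξ)` is a normal subgroup triple for the
wreath product `G ≀ S_m` (so `ξ : Q → G^m/K` is an antihomomorphism with
`(qξ)^p = (pqp⁻¹)ξ` and `h^q K = (qξ)⁻¹ (hK) (qξ)`, the action being
`h^p = h ∘ p`).  Then `L = M = G`, so `K = {(g_1,…,g_m) : g_1 g_2 ⋯ g_m ∈ N}`. -/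
theorem normal_triple_forces_top (G : Type*) [Group G] (m : ℕ)
    (q : InvQuadruple G (m + 3))
    (K : Subgroup (Fin (m + 3) → G)) [hKn : K.Normal]
    (hKset : (K : Set (Fin (m + 3) → G)) = KmSet q)
    (hKinv : ∀ σ : Equiv.Perm (Fin (m + 3)), ∀ v ∈ K, v ∘ σ ∈ K)
    (Q : Subgroup (Equiv.Perm (Fin (m + 3)))) (hQn : Q.Normal) (hQ : Q ≠ ⊥)
    (ξ : Q → (Fin (m + 3) → G) ⧸ K)
    (hanti : ∀ s t : Q, ξ (s * t) = ξ t * ξ s)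
    (hconj : ∀ (s : Q) (p : Equiv.Perm (Fin (m + 3))) (s' : Q),
      (s' : Equiv.Perm (Fin (m + 3))) = p * (s : Equiv.Perm (Fin (m + 3))) * p⁻¹ →
      ∀ x : Fin (m + 3) → G, ξ s = QuotientGroup.mk x →
        ξ s' = QuotientGroup.mk (x ∘ ⇑p))
    (hact : ∀ (s : Q) (h x : Fin (m + 3) → G), ξ s = QuotientGroup.mk x →
      QuotientGroup.mk (h ∘ ⇑(s : Equiv.Perm (Fin (m + 3)))) =
        (QuotientGroup.mk (x⁻¹ * h * x) : (Fin (m + 3) → G) ⧸ K)) :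
    q.L = ⊤ ∧ q.M = ⊤ ∧
    (K : Set (Fin (m + 3) → G)) =
      {v : Fin (m + 3) → G | (List.ofFn v).prod ∈ q.N} := by

  classical
  -- a nontrivial element of Q
  obtain ⟨sQ, hsQ1⟩ := Subgroup.ne_bot_iff_exists_ne_one.mp hQ
  set s : Equiv.Perm (Fin (m + 3)) := (sQ : Equiv.Perm (Fin (m + 3))) with hs_def
  have hs1 : s ≠ 1 := by
    intro h
    exact hsQ1 (Subtype.ext h)
  obtain ⟨i, hi⟩ : ∃ i, s i ≠ i := by
    by_contra h
    push_neg at h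
    exact hs1 (Equiv.ext h)
  set j : Fin (m + 3) := s.symm i with hj_def
  have hsj : s j = i := s.apply_symm_apply i
  have hji : j ≠ i := fun h => hi (h ▸ hsj)
  obtain ⟨x, hx⟩ := QuotientGroup.mk_surjective (ξ sQ)
  have key : ∀ g : G,
      ((Pi.mulSingle i g ∘ ⇑s)⁻¹ * (x⁻¹ * Pi.mulSingle i g * x)) ∈ KmSet q := by
    intro g
    have h1 := hact sQ (Pi.mulSingle i g) x hx.symm
    rw [QuotientGroup.eq] at h1
    rw [← hKset] at *
    exact h1
  have kval_j : ∀ g : G,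
      (((Pi.mulSingle i g ∘ ⇑s)⁻¹ * (x⁻¹ * Pi.mulSingle i g * x) : Fin (m + 3) → G)) j
        = g⁻¹ := by
    intro g
    simp [Pi.mulSingle_apply, hsj, hji]
  have kval_other : ∀ g : G, ∀ t : Fin (m + 3), t ≠ i → t ≠ j →
      (((Pi.mulSingle i g ∘ ⇑s)⁻¹ * (x⁻¹ * Pi.mulSingle i g * x) : Fin (m + 3) → G)) t
        = 1 := by
    intro g t hti htj
    have hst : s t ≠ i := by
      intro h
      exact htj (by rw [hj_def, ← h, Equiv.symm_apply_apply])
    simp [Pi.mulSingle_apply, hti, hst]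
  have hLtop : q.L = ⊤ := by
    rw [Subgroup.eq_top_iff']
    intro g
    have h2 := (key g).1 j
    rw [kval_j g] at h2
    exact (inv_mem_iff).mp h2
  obtain ⟨t0, ht0i, ht0j⟩ : ∃ t0 : Fin (m + 3), t0 ≠ i ∧ t0 ≠ j := by
    have hcard : ({i, j} : Finset (Fin (m + 3))).card < Fintype.card (Fin (m + 3)) := by
      refine lt_of_le_of_lt (Finset.card_insert_le _ _) ?_
      simp only [Finset.card_singleton, Fintype.card_fin]
      omega
    have hne : ({i, j} : Finset (Fin (m + 3))) ≠ Finset.univ := by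
      intro h
      rw [h, Finset.card_univ] at hcard
      exact lt_irrefl _ hcard
    obtain ⟨t0, -, ht0⟩ :=
      Finset.exists_of_ssubset ((Finset.subset_univ _).ssubset_of_ne hne)
    simp only [Finset.mem_insert, Finset.mem_singleton, not_or] at ht0
    exact ⟨t0, ht0.1, ht0.2⟩
  have hMtop : q.M = ⊤ := by
    rw [Subgroup.eq_top_iff']
    intro g
    have h2 := (key g).2.1 j t0
    rw [kval_j g, kval_other g t0 ht0i ht0j] at h2
    simpa using h2
  have hsimp : ∀ v : Fin (m + 3) → G,
      (v 0 ^ (1 - ((m + 3 : ℕ) : ℤ)))⁻¹ *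
        (v 0 ^ (2 - ((m + 3 : ℕ) : ℤ)) * (List.ofFn v).tail.prod)
        = (List.ofFn v).prod := by
    intro v
    rw [← zpow_neg, ← mul_assoc, ← zpow_add]
    have he : -(1 - ((m + 3 : ℕ) : ℤ)) + (2 - ((m + 3 : ℕ) : ℤ)) = 1 := by ring
    rw [he, zpow_one, List.ofFn_succ, List.tail_cons, List.prod_cons]
  refine ⟨hLtop, hMtop, ?_⟩
  rw [hKset]
  ext v
  simp only [KmSet, Set.mem_setOf_eq]
  have hv0L : v 0 ∈ q.L := hLtop.symm ▸ Subgroup.mem_top _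
  have hφ : q.φ ⟨v 0, hv0L⟩ = QuotientGroup.mk ((v 0) ^ (1 - ((m + 3 : ℕ) : ℤ))) :=
    q.hMres ⟨v 0, hv0L⟩ (hMtop.symm ▸ Subgroup.mem_top _)
  constructor
  · rintro ⟨-, -, h0, hφ'⟩
    have hφ'' : q.φ ⟨v 0, hv0L⟩ =
        QuotientGroup.mk (v 0 ^ (2 - ((m + 3 : ℕ) : ℤ)) * (List.ofFn v).tail.prod) := hφ'
    rw [hφ, QuotientGroup.eq, hsimp v] at hφ''
    exact hφ''
  · intro hvN
    refine ⟨fun _ => hLtop.symm ▸ Subgroup.mem_top _,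
      fun _ _ => hMtop.symm ▸ Subgroup.mem_top _, hv0L, ?_⟩
    rw [hφ, QuotientGroup.eq, hsimp v]
    exact hvN
end
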